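/- arXiv:2106.00046 — 8 statements merged into one kernel-verified Lean document; each statement's English description precedes it below -/
import Mathlib

section
/- Let Z be a collection of subsets of a finite set E and r : Z → ℤ. Suppose (Z0) Z is a lattice under inclusion, (Z1) r(0_Z) = 0 where 0_Z is the least set in Z, (Z2) 0 < r(Y) - r(X) < |Y - X| for all X, Y ∈ Z with X ⊊ Y, and (Z3) r(X ∨ Y) + r(X ∧ Y) + |(X ∩ Y) - (X ∧ Y)| ≤ r(X) + r(Y) for all X, Y ∈ Z. Then there exists a matroid M on E whose set of cyclic flats is exactly Z and whose rank function agrees with r on Z. -/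
open Set Matroid

namespace ConePaper

variable {α : Type*}

/-- The rank of a set in a matroid: the supremum of sizes of independent subsets. -/
noncomputable def rk (M : Matroid α) (X : Set α) : ℕ :=
  sSup {n : ℕ | ∃ I, M.Indep I ∧ I ⊆ X ∧ I.ncard = n}

/-- A loopless matroid: every singleton of the ground set is independent. -/
def Loopless (M : Matroid α) : Prop := ∀ e ∈ M.E, M.Indep {e}

/-- A coloop: an element of the ground set lying in every base. -/
def IsColoop (M : Matroid α) (e : α) : Prop := e ∈ M.E ∧ ∀ B, M.IsBase B → e ∈ B

/-- A circuit: a minimal dependent set. -/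
def IsCircuit (M : Matroid α) (C : Set α) : Prop :=
  C ⊆ M.E ∧ ¬ M.Indep C ∧ ∀ x ∈ C, M.Indep (C \ {x})

/-- A cyclic flat: a flat whose restriction has no coloops. -/
def CyclicFlat (M : Matroid α) (F : Set α) : Prop :=
  M.IsFlat F ∧ ∀ e ∈ F, ¬ IsColoop (M ↾ F) e

/-- Deletion of a set from a matroid. -/
def mdel (M : Matroid α) (X : Set α) : Matroid α := M ↾ (M.E \ X)

/-- The cone `q(S) = S ∪ {a} ∪ ⋃_{e ∈ S} T e`. -/
def cone (T : α → Set α) (a : α) (S : Set α) : Set α := S ∪ {a} ∪ ⋃ e ∈ S, T e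

/-- The projection `p(S) = (S ∩ E) ∪ {e ∈ E : S ∩ T e ≠ ∅}`. -/
def proj (E : Set α) (T : α → Set α) (S : Set α) : Set α :=
  (S ∩ E) ∪ {e ∈ E | (S ∩ T e).Nonempty}

/-- `FreeCone M Q T a m` says that `Q` is the free `m`-cone of the loopless
matroid `M`, with extra points `T e` (of size `m`) for `e ∈ M.E` and tip `a`:
its cyclic flats are those of `M` (with the same rank) together with the cones
of nonempty flats of `M` (with rank one greater). -/
structure FreeCone (M Q : Matroid α) (T : α → Set α) (a : α) (m : ℕ) : Prop where
  hm : 1 ≤ m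
  hMfin : M.E.Finite
  hloopless : Loopless M
  hTfin : ∀ e ∈ M.E, (T e).Finite
  hTcard : ∀ e ∈ M.E, (T e).ncard = m
  hTdisjE : ∀ e ∈ M.E, Disjoint (T e) M.E
  hTdisj : ∀ e ∈ M.E, ∀ f ∈ M.E, e ≠ f → Disjoint (T e) (T f)
  ha : a ∉ M.E ∪ ⋃ e ∈ M.E, T e
  hQE : Q.E = M.E ∪ (⋃ e ∈ M.E, T e) ∪ {a}
  hcyclic : ∀ F, CyclicFlat Q F ↔
      (CyclicFlat M F ∨ ∃ F', M.IsFlat F' ∧ F'.Nonempty ∧ F = cone T a F')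
  hrank1 : ∀ F, CyclicFlat M F → rk Q F = rk M F
  hrank2 : ∀ F', M.IsFlat F' → F'.Nonempty → rk Q (cone T a F') = rk M F' + 1

/-- A flag of a rank-`k` matroid: a chain of flats, one of each rank `0,…,k`. -/
def IsFlag (N : Matroid α) (k : ℕ) (X : ℕ → Set α) : Prop :=
  (∀ i ≤ k, N.IsFlat (X i) ∧ rk N (X i) = i) ∧ ∀ i < k, X i ⊂ X (i + 1)

/-- Auxiliary independence predicate for the cyclic-flat-axiom construction. -/
def Ind (Z : Set (Set α)) (r : Set α → ℤ) (E : Set α) (I : Set α) : Prop :=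
  I ⊆ E ∧ ∀ F ∈ Z, ((I ∩ F).ncard : ℤ) ≤ r F

/-- Cyclic flat axioms: a family of sets satisfying (Z0)–(Z3) is the family of
cyclic flats of a matroid on `E`, with ranks given by `r`. -/
theorem cyclic_flat_axioms (E : Set α) (hE : E.Finite) (Z : Set (Set α))
    (hZE : ∀ X ∈ Z, X ⊆ E) (r : Set α → ℤ)
    (Z0bot : ∃ B ∈ Z, ∀ X ∈ Z, B ⊆ X)
    (Z0join : ∀ X ∈ Z, ∀ Y ∈ Z,
      ∃ J ∈ Z, X ⊆ J ∧ Y ⊆ J ∧ ∀ W ∈ Z, X ⊆ W → Y ⊆ W → J ⊆ W)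
    (Z0meet : ∀ X ∈ Z, ∀ Y ∈ Z,
      ∃ I ∈ Z, I ⊆ X ∧ I ⊆ Y ∧ ∀ W ∈ Z, W ⊆ X → W ⊆ Y → W ⊆ I)
    (Z1 : ∀ B ∈ Z, (∀ X ∈ Z, B ⊆ X) → r B = 0)
    (Z2 : ∀ X ∈ Z, ∀ Y ∈ Z, X ⊂ Y → 0 < r Y - r X ∧ r Y - r X < ((Y \ X).ncard : ℤ))
    (Z3 : ∀ X ∈ Z, ∀ Y ∈ Z, ∀ J ∈ Z, ∀ I ∈ Z,
      (X ⊆ J ∧ Y ⊆ J ∧ ∀ W ∈ Z, X ⊆ W → Y ⊆ W → J ⊆ W) →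
      (I ⊆ X ∧ I ⊆ Y ∧ ∀ W ∈ Z, W ⊆ X → W ⊆ Y → W ⊆ I) →
      r J + r I + (((X ∩ Y) \ I).ncard : ℤ) ≤ r X + r Y) :
    ∃ M : Matroid α, M.E = E ∧ (∀ F, CyclicFlat M F ↔ F ∈ Z) ∧
      ∀ X ∈ Z, (rk M X : ℤ) = r X := by
  classical
  obtain ⟨B, hBZ, hBbot⟩ := Z0bot
  have hrB : r B = 0 := Z1 B hBZ hBbot
  have hfin : ∀ {X : Set α}, X ⊆ E → X.Finite := fun h => hE.subset h
  -- nonnegativity of r on Z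
  have hnonneg : ∀ F ∈ Z, 0 ≤ r F := by
    intro F hF
    rcases eq_or_ne B F with h | h
    · rw [← h, hrB]
    · have h2 := (Z2 B hBZ F hF ((hBbot F hF).ssubset_of_ne h)).1
      linarith
  -- weak monotonicity of r on Z
  have hmono : ∀ F ∈ Z, ∀ G ∈ Z, F ⊆ G → r F ≤ r G := by
    intro F hF G hG hFG
    rcases eq_or_ne F G with h | h
    · rw [h]
    · have h2 := (Z2 F hF G hG (hFG.ssubset_of_ne h)).1
      linarith
  -- meet bound
  have L3 : ∀ F ∈ Z, ∀ G ∈ Z, ∀ I ∈ Z,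
      (I ⊆ F ∧ I ⊆ G ∧ ∀ W ∈ Z, W ⊆ F → W ⊆ G → W ⊆ I) →
      r I + (((F ∩ G) \ I).ncard : ℤ) ≤ r G := by
    intro F hF G hG I hIZ hIspec
    obtain ⟨J, hJZ, hJspec⟩ := Z0join F hF G hG
    have h3 := Z3 F hF G hG J hJZ I hIZ hJspec hIspec
    have h4 := hmono F hF J hJZ hJspec.1
    linarith
  -- cardinality split
  have hsplit : ∀ F G I : Set α, F ⊆ E → I ⊆ G →
      ((F \ I).ncard : ℤ) = ((F \ G).ncard : ℤ) + (((F ∩ G) \ I).ncard : ℤ) := by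
    intro F G I hFE hIG
    have hdecomp : F \ I = (F \ G) ∪ ((F ∩ G) \ I) := by
      ext x
      constructor
      · rintro ⟨hxF, hxI⟩
        by_cases hxG : x ∈ G
        · exact Or.inr ⟨⟨hxF, hxG⟩, hxI⟩
        · exact Or.inl ⟨hxF, hxG⟩
      · rintro (⟨hxF, hxG⟩ | ⟨⟨hxF, _⟩, hxI⟩)
        · exact ⟨hxF, fun hxI => hxG (hIG hxI)⟩
        · exact ⟨hxF, hxI⟩
    have hdisj : Disjoint (F \ G) ((F ∩ G) \ I) := by
      rw [Set.disjoint_left]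
      rintro x ⟨_, hxG⟩ ⟨⟨_, hxG'⟩, _⟩
      exact hxG hxG'
    rw [hdecomp, Set.ncard_union_eq hdisj ((hfin hFE).diff)
      (((hfin hFE).inter_of_left _).diff)]
    push_cast
    ring
  -- strict submonotone bound
  have L4b : ∀ F ∈ Z, ∀ G ∈ Z, ¬ F ⊆ G → r F + 1 ≤ r G + ((F \ G).ncard : ℤ) := by
    intro F hF G hG hnsub
    obtain ⟨I, hIZ, hIF, hIG, hImax⟩ := Z0meet F hF G hG
    have hIneF : I ≠ F := fun h => hnsub (h ▸ hIG)
    have h2 := (Z2 I hIZ F hF (hIF.ssubset_of_ne hIneF)).2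
    have h3 := L3 F hF G hG I hIZ ⟨hIF, hIG, hImax⟩
    have hc := hsplit F G I (hZE F hF) hIG
    linarith
  have L4a : ∀ F ∈ Z, ∀ G ∈ Z, r F ≤ r G + ((F \ G).ncard : ℤ) := by
    intro F hF G hG
    by_cases h : F ⊆ G
    · have h1 := hmono F hF G hG h
      have h2 : (0:ℤ) ≤ ((F \ G).ncard : ℤ) := Int.ofNat_nonneg _
      linarith
    · linarith [L4b F hF G hG h]
  -- tightness is preserved under joins
  have L5 : ∀ I : Set α, Ind Z r E I → ∀ F ∈ Z, ∀ G ∈ Z,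
      ((I ∩ F).ncard : ℤ) = r F → ((I ∩ G).ncard : ℤ) = r G →
      ∀ J ∈ Z, (F ⊆ J ∧ G ⊆ J ∧ ∀ W ∈ Z, F ⊆ W → G ⊆ W → J ⊆ W) →
      ((I ∩ J).ncard : ℤ) = r J := by
    intro I hIind F hF G hG htF htG J hJZ hJspec
    obtain ⟨Im, hImZ, hImF, hImG, hImmax⟩ := Z0meet F hF G hG
    have h3 := Z3 F hF G hG J hJZ Im hImZ hJspec ⟨hImF, hImG, hImmax⟩
    have hfinI := hfin hIind.1
    have hUI : ((I ∩ F) ∪ (I ∩ G)).ncard + ((I ∩ F) ∩ (I ∩ G)).ncard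
        = (I ∩ F).ncard + (I ∩ G).ncard :=
      Set.ncard_union_add_ncard_inter _ _ (hfinI.inter_of_left _) (hfinI.inter_of_left _)
    have hcup : (I ∩ F) ∪ (I ∩ G) = I ∩ (F ∪ G) := (Set.inter_union_distrib_left I F G).symm
    have hcap : (I ∩ F) ∩ (I ∩ G) = I ∩ (F ∩ G) := by
      ext x; simp only [Set.mem_inter_iff]; tauto
    rw [hcup, hcap] at hUI
    have h_le1 : (I ∩ (F ∪ G)).ncard ≤ (I ∩ J).ncard :=
      Set.ncard_le_ncard (Set.inter_subset_inter_right I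
        (Set.union_subset hJspec.1 hJspec.2.1)) (hfinI.inter_of_left _)
    have h_le2 : ((I ∩ (F ∩ G)).ncard : ℤ) ≤ r Im + (((F ∩ G) \ Im).ncard : ℤ) := by
      have hsub : I ∩ (F ∩ G) ⊆ (I ∩ Im) ∪ ((F ∩ G) \ Im) := by
        rintro x ⟨hxI, hxFG⟩
        by_cases hxm : x ∈ Im
        · exact Or.inl ⟨hxI, hxm⟩
        · exact Or.inr ⟨hxFG, hxm⟩
      have hfin2 : ((I ∩ Im) ∪ ((F ∩ G) \ Im)).Finite :=
        (hfinI.inter_of_left _).union (((hfin (hZE F hF)).inter_of_left _).diff)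
      have ha := Set.ncard_le_ncard hsub hfin2
      have hb := Set.ncard_union_le (I ∩ Im) ((F ∩ G) \ Im)
      have hc := hIind.2 Im hImZ
      have : ((I ∩ (F ∩ G)).ncard : ℤ) ≤ ((I ∩ Im).ncard : ℤ) + (((F ∩ G) \ Im).ncard : ℤ) := by
        exact_mod_cast ha.trans hb
      linarith
    have hup := hIind.2 J hJZ
    have hUI' : ((I ∩ (F ∪ G)).ncard : ℤ) + ((I ∩ (F ∩ G)).ncard : ℤ)
        = ((I ∩ F).ncard : ℤ) + ((I ∩ G).ncard : ℤ) := by exact_mod_cast hUI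
    have h_le1' : ((I ∩ (F ∪ G)).ncard : ℤ) ≤ ((I ∩ J).ncard : ℤ) := by exact_mod_cast h_le1
    linarith
  -- a tight set containing any finite family of demands
  have L6 : ∀ (D : Finset α), ∀ I : Set α, Ind Z r E I →
      (∀ e ∈ D, ∃ F ∈ Z, ((I ∩ F).ncard : ℤ) = r F ∧ e ∈ F) →
      ∃ G ∈ Z, ((I ∩ G).ncard : ℤ) = r G ∧ ∀ e ∈ D, e ∈ G := by
    intro D
    induction D using Finset.induction_on with
    | empty =>
      intro I hI _
      refine ⟨B, hBZ, ?_, by simp⟩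
      have h1 := hI.2 B hBZ
      have h0 : (0:ℤ) ≤ ((I ∩ B).ncard : ℤ) := Int.ofNat_nonneg _
      omega
    | insert a D hnotmem ih =>
      intro I hI hall
      obtain ⟨G, hGZ, hGt, hGD⟩ := ih I hI (fun e he => hall e (Finset.mem_insert_of_mem he))
      obtain ⟨F, hFZ, hFt, haF⟩ := hall a (Finset.mem_insert_self a D)
      obtain ⟨J, hJZ, hJspec⟩ := Z0join F hFZ G hGZ
      refine ⟨J, hJZ, L5 I hI F hFZ G hGZ hFt hGt J hJZ hJspec, ?_⟩
      intro e he
      rcases Finset.mem_insert.1 he with rfl | he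
      · exact hJspec.1 haF
      · exact hJspec.2.1 (hGD e he)
  -- why a set fails to stay independent: a tight obstruction
  have T : ∀ I : Set α, ∀ e, Ind Z r E I → e ∈ E → ¬ Ind Z r E (insert e I) →
      ∃ F ∈ Z, ((I ∩ F).ncard : ℤ) = r F ∧ e ∈ F := by
    intro I e hI heE hnI
    have hsub : insert e I ⊆ E := Set.insert_subset heE hI.1
    have heI : e ∉ I := by
      intro heI
      rw [Set.insert_eq_of_mem heI] at hnI
      exact hnI hI
    unfold Ind at hnI
    push_neg at hnI
    obtain ⟨F, hFZ, hFgt⟩ := hnI hsub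
    have heF : e ∈ F := by
      by_contra heF
      have hcap : insert e I ∩ F = I ∩ F := by
        ext x
        simp only [Set.mem_inter_iff, Set.mem_insert_iff]
        constructor
        · rintro ⟨rfl | hxI, hxF⟩
          · exact absurd hxF heF
          · exact ⟨hxI, hxF⟩
        · rintro ⟨hxI, hxF⟩; exact ⟨Or.inr hxI, hxF⟩
      rw [hcap] at hFgt
      exact absurd (hI.2 F hFZ) (not_le.2 hFgt)
    have hins : insert e I ∩ F = insert e (I ∩ F) := Set.insert_inter_of_mem heF
    have hcard : (insert e (I ∩ F)).ncard = (I ∩ F).ncard + 1 :=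
      Set.ncard_insert_of_notMem (fun h => heI h.1) ((hfin hI.1).inter_of_left _)
    have hle := hI.2 F hFZ
    refine ⟨F, hFZ, ?_, heF⟩
    rw [hins, hcard] at hFgt
    push_cast at hFgt
    linarith
  -- matroid axioms
  have indep_empty : Ind Z r E ∅ :=
    ⟨Set.empty_subset E, fun F hF => by
      rw [Set.empty_inter]; simpa using hnonneg F hF⟩
  have indep_subset : ∀ ⦃I J : Set α⦄, Ind Z r E J → I ⊆ J → Ind Z r E I := by
    intro I J hJ hIJ
    refine ⟨hIJ.trans hJ.1, fun F hF => le_trans ?_ (hJ.2 F hF)⟩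
    exact_mod_cast Set.ncard_le_ncard (Set.inter_subset_inter_left F hIJ)
      ((hfin hJ.1).inter_of_left _)
  have indep_aug : ∀ ⦃I J : Set α⦄, Ind Z r E I → Ind Z r E J → I.ncard < J.ncard →
      ∃ e ∈ J, e ∉ I ∧ Ind Z r E (insert e I) := by
    intro I J hI hJ hlt
    by_contra hcon
    push_neg at hcon
    have htight : ∀ e ∈ J \ I, ∃ F ∈ Z, ((I ∩ F).ncard : ℤ) = r F ∧ e ∈ F := by
      intro e he
      exact T I e hI (hJ.1 he.1) (hcon e he.1 he.2)
    have hJIfin : (J \ I).Finite := (hfin hJ.1).diff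
    rcases Set.eq_empty_or_nonempty (J \ I) with hempty | hne
    · have hsub : J ⊆ I := Set.diff_eq_empty.1 hempty
      have := Set.ncard_le_ncard hsub (hfin hI.1)
      omega
    obtain ⟨G, hGZ, hGt, hGD⟩ := L6 hJIfin.toFinset I hI
      (fun e he => htight e (hJIfin.mem_toFinset.1 he))
    have hJI_G : J \ I ⊆ G := fun x hx => hGD x (hJIfin.mem_toFinset.2 hx)
    have h1 : (J ∩ G).ncard + (J \ G).ncard = J.ncard :=
      Set.ncard_inter_add_ncard_diff_eq_ncard J G (hfin hJ.1)
    have h2 : (I ∩ G).ncard + (I \ G).ncard = I.ncard :=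
      Set.ncard_inter_add_ncard_diff_eq_ncard I G (hfin hI.1)
    have h3 : (J ∩ G).ncard ≤ (I ∩ G).ncard := by
      have h := hJ.2 G hGZ
      rw [← hGt] at h
      exact_mod_cast h
    have h4 : J \ G ⊆ I \ G := by
      rintro x ⟨hxJ, hxG⟩
      by_cases hxI : x ∈ I
      · exact ⟨hxI, hxG⟩
      · exact absurd (hJI_G ⟨hxJ, hxI⟩) hxG
    have h5 : (J \ G).ncard ≤ (I \ G).ncard := Set.ncard_le_ncard h4 ((hfin hI.1).diff)
    omega
  -- the matroid
  set M : Matroid α := (IndepMatroid.ofFinite hE (Ind Z r E) indep_empty indep_subset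
    indep_aug (fun I hI => hI.1)).matroid with hMdef
  have hME : M.E = E := rfl
  have hMI : ∀ I : Set α, M.Indep I ↔ Ind Z r E I := by
    intro I
    rw [hMdef, IndepMatroid.matroid_indep_iff, IndepMatroid.ofFinite_indep]
  -- bases of a set have maximum cardinality among independent subsets
  have D1 : ∀ X I J' : Set α, M.IsBasis I X → M.Indep J' → J' ⊆ X → J'.ncard ≤ I.ncard := by
    intro X I J' hI hJ' hJX
    by_contra hlt
    push_neg at hlt
    obtain ⟨e, heJ, heI, hins⟩ := indep_aug ((hMI I).1 hI.indep) ((hMI J').1 hJ') hlt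
    have heq : I = insert e I := hI.eq_of_subset_indep ((hMI _).2 hins)
      (Set.subset_insert e I) (Set.insert_subset (hJX heJ) hI.subset)
    exact heI (by rw [heq]; exact Set.mem_insert e I)
  have hSne : ∀ X : Set α, (0:ℕ) ∈ {n | ∃ I, M.Indep I ∧ I ⊆ X ∧ I.ncard = n} :=
    fun X => ⟨∅, M.empty_indep, Set.empty_subset X, Set.ncard_empty α⟩
  have hSbdd : ∀ X : Set α, BddAbove {n | ∃ I, M.Indep I ∧ I ⊆ X ∧ I.ncard = n} := by
    intro X
    refine ⟨E.ncard, ?_⟩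
    rintro n ⟨I, hI, hIX, rfl⟩
    exact Set.ncard_le_ncard ((hMI I).1 hI).1 hE
  -- rk is the size of any basis
  have D2 : ∀ X I : Set α, M.IsBasis I X → rk M X = I.ncard := by
    intro X I hI
    unfold rk
    apply le_antisymm
    · apply csSup_le ⟨0, hSne X⟩
      rintro n ⟨J, hJ, hJX, rfl⟩
      exact D1 X I J hI hJ hJX
    · exact le_csSup (hSbdd X) ⟨I, hI.indep, hI.subset, rfl⟩
  -- a basis is either everything or there is a tight set covering the complement
  have D4 : ∀ X I : Set α, X ⊆ E → M.IsBasis I X →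
      I = X ∨ ∃ G ∈ Z, ((I ∩ G).ncard : ℤ) = r G ∧ X \ I ⊆ G := by
    intro X I hXE hI
    rcases eq_or_ne I X with h | h
    · exact Or.inl h
    right
    have hIind : Ind Z r E I := (hMI I).1 hI.indep
    have hdfin : (X \ I).Finite := (hfin hXE).diff
    have htight : ∀ e ∈ X \ I, ∃ F ∈ Z, ((I ∩ F).ncard : ℤ) = r F ∧ e ∈ F := by
      intro e he
      refine T I e hIind (hXE he.1) ?_
      intro hind
      have heq := hI.eq_of_subset_indep ((hMI _).2 hind) (Set.subset_insert e I)
        (Set.insert_subset he.1 hI.subset)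
      exact he.2 (by rw [heq]; exact Set.mem_insert e I)
    obtain ⟨G, hGZ, hGt, hGD⟩ := L6 hdfin.toFinset I hIind
      (fun e he => htight e (hdfin.mem_toFinset.1 he))
    exact ⟨G, hGZ, hGt, fun x hx => hGD x (hdfin.mem_toFinset.2 hx)⟩
  -- the rank of a set in Z is r
  have Ri : ∀ F ∈ Z, ∀ I : Set α, M.IsBasis I F → (I.ncard : ℤ) = r F := by
    intro F hFZ I hI
    have hIind := (hMI I).1 hI.indep
    have hFE := hZE F hFZ
    have hupper : (I.ncard : ℤ) ≤ r F := by
      have hcap : I ∩ F = I := Set.inter_eq_self_of_subset_left hI.subset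
      have h := hIind.2 F hFZ
      rwa [hcap] at h
    refine le_antisymm hupper ?_
    rcases D4 F I hFE hI with heq | ⟨G, hGZ, hGt, hGD⟩
    · have h4 := L4a F hFZ B hBZ
      have h5 : ((F \ B).ncard : ℤ) ≤ (F.ncard : ℤ) := by
        exact_mod_cast Set.ncard_le_ncard Set.diff_subset (hfin hFE)
      rw [heq]
      linarith
    · have h1 : ((I ∩ G).ncard : ℤ) + ((I \ G).ncard : ℤ) = (I.ncard : ℤ) := by
        exact_mod_cast Set.ncard_inter_add_ncard_diff_eq_ncard I G (hfin hIind.1)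
      have hFG_subI : F \ G ⊆ I := fun y hy => by
        by_contra hyI
        exact hy.2 (hGD ⟨hy.1, hyI⟩)
      have hIG_eq : I \ G = F \ G :=
        (Set.diff_subset_diff_left hI.subset).antisymm (fun y hy => ⟨hFG_subI hy, hy.2⟩)
      have h4 := L4a F hFZ G hGZ
      rw [hIG_eq] at h1
      linarith
  -- every member of Z is a flat of M
  have FF : ∀ F ∈ Z, M.IsFlat F := by
    intro F hFZ
    have hFE := hZE F hFZ
    refine ⟨?_, hFE⟩
    intro I X hIF hIX
    by_contra hXF
    obtain ⟨x, hxX, hxF⟩ := Set.not_subset.1 hXF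
    have hIins : M.IsBasis I (insert x F) := (hIF.isBasis_union hIX).isBasis_subset
      (hIF.subset.trans (Set.subset_insert x F))
      (Set.insert_subset (Or.inr hxX) Set.subset_union_left)
    have hxE : x ∈ E := hIX.subset_ground hxX
    have hIcard := Ri F hFZ I hIF
    rcases D4 (insert x F) I (Set.insert_subset hxE hFE) hIins with heq | ⟨G, hGZ, hGt, hGD⟩
    · have hxI : x ∈ I := by rw [heq]; exact Set.mem_insert x F
      exact hxF (hIF.subset hxI)
    · have hxI : x ∉ I := fun h => hxF (hIF.subset h)
      have hxG : x ∈ G := hGD ⟨Set.mem_insert x F, hxI⟩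
      have hFG_subI : F \ G ⊆ I := by
        rintro y ⟨hyF, hyG⟩
        by_contra hyI
        exact hyG (hGD ⟨Set.mem_insert_of_mem x hyF, hyI⟩)
      have hIG_eq : I \ G = F \ G :=
        (Set.diff_subset_diff_left hIF.subset).antisymm (fun y hy => ⟨hFG_subI hy, hy.2⟩)
      have h1 : ((I ∩ G).ncard : ℤ) + ((I \ G).ncard : ℤ) = (I.ncard : ℤ) := by
        exact_mod_cast Set.ncard_inter_add_ncard_diff_eq_ncard I G
          (hfin ((hMI I).1 hIF.indep).1)
      rw [hIG_eq] at h1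
      by_cases hFsubG : F ⊆ G
      · have hssub : F ⊂ G := hFsubG.ssubset_of_ne (fun h => hxF (h ▸ hxG))
        have h2 := (Z2 F hFZ G hGZ hssub).1
        have hdiff0 : F \ G = ∅ := Set.diff_eq_empty.2 hFsubG
        rw [hdiff0] at h1
        simp only [Set.ncard_empty, Nat.cast_zero, add_zero] at h1
        linarith
      · have h2 := L4b F hFZ G hGZ hFsubG
        linarith
  -- no member of Z has a coloop in its restriction
  have CF : ∀ F ∈ Z, ∀ e ∈ F, ¬ IsColoop (M ↾ F) e := by
    intro F hFZ e heF hcol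
    have hFE := hZE F hFZ
    have hFME : F ⊆ M.E := hFE
    obtain ⟨J, hJ⟩ := M.exists_isBasis (F \ {e}) (Set.diff_subset.trans hFME)
    have hJind := (hMI J).1 hJ.indep
    have hJcard : (J.ncard : ℤ) = r F := by
      have hupper : (J.ncard : ℤ) ≤ r F := by
        have hcap : J ∩ F = J :=
          Set.inter_eq_self_of_subset_left (hJ.subset.trans Set.diff_subset)
        have h := hJind.2 F hFZ
        rwa [hcap] at h
      refine le_antisymm hupper ?_
      rcases D4 (F \ {e}) J (Set.diff_subset.trans hFE) hJ with heq | ⟨G, hGZ, hGt, hGD⟩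
      · by_cases hFB : F ⊆ B
        · have hFeqB : F = B := hFB.antisymm (hBbot F hFZ)
          have hrF : r F = 0 := by rw [hFeqB, hrB]
          have h0 : (0:ℤ) ≤ (J.ncard : ℤ) := Int.ofNat_nonneg _
          linarith
        · have h4 := L4b F hFZ B hBZ hFB
          have h5 : ((F \ B).ncard : ℤ) ≤ (F.ncard : ℤ) := by
            exact_mod_cast Set.ncard_le_ncard Set.diff_subset (hfin hFE)
          have h6 : ((F \ {e}).ncard : ℤ) + 1 = (F.ncard : ℤ) := by
            exact_mod_cast Set.ncard_diff_singleton_add_one heF (hfin hFE)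
          rw [heq]
          linarith
      · have h1 : ((J ∩ G).ncard : ℤ) + ((J \ G).ncard : ℤ) = (J.ncard : ℤ) := by
          exact_mod_cast Set.ncard_inter_add_ncard_diff_eq_ncard J G (hfin hJind.1)
        have hFeG_subJ : (F \ {e}) \ G ⊆ J := by
          rintro y ⟨hyFe, hyG⟩
          by_contra hyJ
          exact hyG (hGD ⟨hyFe, hyJ⟩)
        have hJG_eq : J \ G = (F \ {e}) \ G :=
          (Set.diff_subset_diff_left hJ.subset).antisymm
            (fun y hy => ⟨hFeG_subJ hy, hy.2⟩)
        rw [hJG_eq] at h1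
        by_cases heG : e ∈ G
        · have hFeG : (F \ {e}) \ G = F \ G := by
            ext y
            constructor
            · rintro ⟨⟨hyF, _⟩, hyG⟩
              exact ⟨hyF, hyG⟩
            · rintro ⟨hyF, hyG⟩
              exact ⟨⟨hyF, fun h => hyG (h ▸ heG)⟩, hyG⟩
          rw [hFeG] at h1
          have h4 := L4a F hFZ G hGZ
          linarith
        · have hnsub : ¬ F ⊆ G := fun h => heG (h heF)
          have h4 := L4b F hFZ G hGZ hnsub
          have heFG : e ∈ F \ G := ⟨heF, heG⟩
          have hcomm : (F \ {e}) \ G = (F \ G) \ {e} := by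
            rw [Set.diff_diff_comm]
          have hcard : (((F \ {e}) \ G).ncard : ℤ) + 1 = ((F \ G).ncard : ℤ) := by
            rw [hcomm]
            exact_mod_cast Set.ncard_diff_singleton_add_one heFG ((hfin hFE).diff)
          linarith
    -- J is in fact a basis of all of F
    have hJF : M.IsBasis J F := by
      rw [isBasis_iff hFME]
      refine ⟨hJ.indep, hJ.subset.trans Set.diff_subset, ?_⟩
      intro K hK hJK hKF
      obtain ⟨I0, hI0⟩ := M.exists_isBasis F hFME
      have hKle : K.ncard ≤ I0.ncard := D1 F I0 K hI0 hK hKF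
      have hI0card := Ri F hFZ I0 hI0
      have hKJ : K.ncard ≤ J.ncard := by
        have h : (K.ncard : ℤ) ≤ (J.ncard : ℤ) := by
          rw [hJcard, ← hI0card]
          exact_mod_cast hKle
        exact_mod_cast h
      exact Set.eq_of_subset_of_ncard_le hJK hKJ (hfin ((hMI K).1 hK).1)
    have hbase : (M ↾ F).IsBase J := (isBase_restrict_iff hFME).2 hJF
    have heJ : e ∈ J := hcol.2 J hbase
    exact (hJ.subset heJ).2 rfl
  -- every cyclic flat of M belongs to Z
  have BW : ∀ F : Set α, CyclicFlat M F → F ∈ Z := by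
    rintro F ⟨hflat, hcyc⟩
    have hFME : F ⊆ M.E := hflat.subset_ground
    have hFE : F ⊆ E := hFME
    obtain ⟨I, hI⟩ := M.exists_isBasis F hFME
    rcases D4 F I hFE hI with heq | ⟨G, hGZ, hGt, hGD⟩
    · -- F is independent
      rcases Set.eq_empty_or_nonempty F with rfl | ⟨e, heF⟩
      · -- F = ∅ : show the bottom of Z is empty
        rcases Set.eq_empty_or_nonempty B with hB0 | ⟨b, hbB⟩
        · rw [← hB0]; exact hBZ
        · exfalso
          have hbE : b ∈ E := hZE B hBZ hbB
          have hnotind : ¬ M.Indep {b} := by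
            rw [hMI]
            rintro ⟨_, h2⟩
            have h3 := h2 B hBZ
            have hcap : {b} ∩ B = {b} :=
              Set.inter_eq_self_of_subset_left (Set.singleton_subset_iff.2 hbB)
            rw [hcap, Set.ncard_singleton, hrB] at h3
            norm_num at h3
          have hbasis : M.IsBasis ∅ {b} := by
            rw [isBasis_iff (show {b} ⊆ M.E from Set.singleton_subset_iff.2 hbE)]
            refine ⟨M.empty_indep, Set.empty_subset _, ?_⟩
            intro K hK h0K hKb
            rcases Set.subset_singleton_iff_eq.1 hKb with rfl | rfl
            · rfl
            · exact absurd hK hnotind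
          have hsub := hflat.subset_of_isBasis_of_isBasis M.empty_indep.isBasis_self hbasis
          exact absurd (hsub (Set.mem_singleton b)) (Set.notMem_empty b)
      · -- F nonempty independent: e is a coloop of M ↾ F, contradiction
        exfalso
        apply hcyc e heF
        have hFind : M.Indep F := by rw [← heq]; exact hI.indep
        constructor
        · rw [restrict_ground_eq]; exact heF
        · intro Bb hBb
          have hBasis' : M.IsBasis Bb F := (isBase_restrict_iff hFME).1 hBb
          have hBbF : Bb = F := hFind.eq_of_isBasis hBasis'
          rw [hBbF]; exact heF
    · -- F has a tight covering set G; show F = G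
      have hIF := hI.subset
      have hIind := (hMI I).1 hI.indep
      have hFG_subI : F \ G ⊆ I := by
        rintro y ⟨hyF, hyG⟩
        by_contra hyI
        exact hyG (hGD ⟨hyF, hyI⟩)
      have hIG_eq : I \ G = F \ G :=
        (Set.diff_subset_diff_left hIF).antisymm (fun y hy => ⟨hFG_subI hy, hy.2⟩)
      have h1 : ((I ∩ G).ncard : ℤ) + ((I \ G).ncard : ℤ) = (I.ncard : ℤ) := by
        exact_mod_cast Set.ncard_inter_add_ncard_diff_eq_ncard I G (hfin hIind.1)
      have hFsubG : F ⊆ G := by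
        by_contra hnsub
        obtain ⟨e, heF, heG⟩ := Set.not_subset.1 hnsub
        have heI : e ∈ I := hFG_subI ⟨heF, heG⟩
        obtain ⟨Bb, hBb, heBb⟩ : ∃ Bb, (M ↾ F).IsBase Bb ∧ e ∉ Bb := by
          by_contra hc
          push_neg at hc
          exact hcyc e heF ⟨by rw [restrict_ground_eq]; exact heF, hc⟩
        have hBbF : M.IsBasis Bb F := (isBase_restrict_iff hFME).1 hBb
        have hcard_eq : Bb.ncard = I.ncard :=
          le_antisymm (D1 F I Bb hI hBbF.indep hBbF.subset) (D1 F Bb I hBbF hI.indep hIF)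
        have hBbind := (hMI Bb).1 hBbF.indep
        have e1 : ((Bb ∩ G).ncard : ℤ) + ((Bb \ G).ncard : ℤ) = (Bb.ncard : ℤ) := by
          exact_mod_cast Set.ncard_inter_add_ncard_diff_eq_ncard Bb G (hfin hBbind.1)
        have e3 : ((Bb ∩ G).ncard : ℤ) ≤ r G := hBbind.2 G hGZ
        have e4 : Bb \ G ⊆ (F \ G) \ {e} := fun x hx =>
          ⟨⟨hBbF.subset hx.1, hx.2⟩, fun hxe => heBb (hxe ▸ hx.1)⟩
        have e5 : ((Bb \ G).ncard : ℤ) ≤ (((F \ G) \ {e}).ncard : ℤ) := by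
          exact_mod_cast Set.ncard_le_ncard e4 (((hfin hFE).diff).diff)
        have e6 : (((F \ G) \ {e}).ncard : ℤ) + 1 = ((F \ G).ncard : ℤ) := by
          exact_mod_cast Set.ncard_diff_singleton_add_one (show e ∈ F \ G from ⟨heF, heG⟩)
            ((hfin hFE).diff)
        have e7 : (Bb.ncard : ℤ) = (I.ncard : ℤ) := by exact_mod_cast hcard_eq
        rw [hIG_eq, hGt] at h1
        linarith
      have hGsubF : G ⊆ F := by
        by_contra hnsub
        obtain ⟨x, hxG, hxF⟩ := Set.not_subset.1 hnsub
        have hxI : x ∉ I := fun h => hxF (hIF h)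
        have hIsubG : I ⊆ G := hIF.trans hFsubG
        by_cases hind : M.Indep (insert x I)
        · have hIind2 := (hMI _).1 hind
          have hsub : insert x I ∩ G = insert x I :=
            Set.inter_eq_self_of_subset_left (Set.insert_subset hxG hIsubG)
          have h2 := hIind2.2 G hGZ
          rw [hsub] at h2
          have h3 : (insert x I).ncard = I.ncard + 1 :=
            Set.ncard_insert_of_notMem hxI (hfin hIind.1)
          have h4 : I ∩ G = I := Set.inter_eq_self_of_subset_left hIsubG
          rw [h4] at hGt
          rw [h3] at h2
          push_cast at h2
          linarith
        · have hxE : x ∈ E := hZE G hGZ hxG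
          have hbas : M.IsBasis I (insert x I) := by
            rw [isBasis_iff (show insert x I ⊆ M.E from Set.insert_subset hxE hIind.1)]
            refine ⟨hI.indep, Set.subset_insert x I, ?_⟩
            intro K hK hIK hKins
            by_contra hne
            have hxK : x ∈ K := by
              by_contra hxK
              have hKI : K ⊆ I := fun y hy => (hKins hy).elim
                (fun h => absurd (h ▸ hy) hxK) id
              exact hne (hIK.antisymm hKI)
            have hKeq : K = insert x I :=
              hKins.antisymm (Set.insert_subset hxK hIK)
            rw [hKeq] at hK
            exact hind hK
          have hsub := hflat.subset_of_isBasis_of_isBasis hI hbas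
          exact hxF (hsub (Set.mem_insert x I))
      rw [hFsubG.antisymm hGsubF]
      exact hGZ
  -- assemble the result
  refine ⟨M, hME, ?_, ?_⟩
  · intro F
    constructor
    · exact BW F
    · intro hFZ
      exact ⟨FF F hFZ, fun e heF => CF F hFZ e heF⟩
  · intro X hXZ
    obtain ⟨I, hI⟩ := M.exists_isBasis X (show X ⊆ M.E from hZE X hXZ)
    rw [D2 X I hI]
    exact Ri X hXZ I hI
end ConePaper
end

section
/- Let M be a loopless matroid on a finite ground set E with rank function r, let m ≥ 1, and let Q = Q_m(M) be the free m-cone of M with tip a. If F is a flat of Q with a ∉ F, then every element of F - E is a coloop of the restriction Q|F. -/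
/-!
The non-coloops of `Q|F` form a cyclic flat of `Q`: each lies in a circuit contained in `F`,
and circuits avoid coloops. This cyclic flat lies inside `F`, so it misses the tip and is not a
cone; hence it is a cyclic flat of `M`, and every element of `F` outside `E` is a coloop of `Q|F`.
-/

open Set Matroid

namespace ConePaper

variable {α : Type*}

lemma isColoop_iff_isColoop {N : Matroid α} {e : α} : IsColoop N e ↔ N.IsColoop e :=
  ⟨fun h ↦ isColoop_iff_forall_mem_isBase.2 h.2,
    fun h ↦ ⟨h.mem_ground, fun _ hB ↦ h.mem_of_isBase hB⟩⟩

lemma _root_.Matroid.isFlat_sdiff_coloops (N : Matroid α) : N.IsFlat (N.E \ N.coloops) :=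
  isFlat_iff_closure_eq.2 <| subset_antisymm
    (fun e he ↦ ⟨N.closure_subset_ground _ he,
      fun (hco : N.IsColoop e) ↦ (hco.mem_of_mem_closure he).2 hco⟩)
    (N.subset_closure _ sdiff_subset)

lemma _root_.Matroid.not_isColoop_restrict_sdiff_coloops (N : Matroid α) {e : α} :
    ¬ (N ↾ (N.E \ N.coloops)).IsColoop e := by
  intro he
  obtain ⟨heE, heK⟩ := he.mem_ground
  obtain ⟨C, hC, heC⟩ := N.exists_mem_isCircuit_of_not_isColoop heE heK
  have hCK : C ⊆ N.E \ N.coloops := subset_sdiff.2 ⟨hC.subset_ground, hC.disjoint_coloops⟩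
  exact he.notMem_isCircuit ((restrict_isCircuit_iff sdiff_subset).2 ⟨hC, hCK⟩) heC

lemma _root_.Matroid.IsFlat.isFlat_of_isFlat_restrict {N : Matroid α} {F Z : Set α}
    (hF : N.IsFlat F) (hZ : (N ↾ F).IsFlat Z) : N.IsFlat Z := by
  have hZF : Z ⊆ F := hZ.subset_ground
  have hclZF : N.closure Z ⊆ F := (N.closure_subset_closure hZF).trans hF.closure.subset
  rw [isFlat_iff_closure_eq, restrict_closure_eq N hZF hF.subset_ground,
    inter_eq_left.2 hclZF] at hZ
  exact isFlat_iff_closure_eq.2 hZ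

lemma cyclicFlat_sdiff_coloops_restrict {N : Matroid α} {F : Set α} (hF : N.IsFlat F) :
    CyclicFlat N (F \ (N ↾ F).coloops) := by
  refine ⟨hF.isFlat_of_isFlat_restrict (N ↾ F).isFlat_sdiff_coloops, fun e _ he ↦ ?_⟩
  rw [isColoop_iff_isColoop, ← restrict_restrict_eq N sdiff_subset] at he
  exact (N ↾ F).not_isColoop_restrict_sdiff_coloops he

/-- If `F` is a flat of the free `m`-cone not containing the tip `a`, then every
element of `F \ E` is a coloop of the restriction `Q|F`. -/
theorem coloops_of_flat_without_tip {M Q : Matroid α} {T : α → Set α} {a : α} {m : ℕ}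
    (hFC : FreeCone M Q T a m) (F : Set α) (hF : Q.IsFlat F) (haF : a ∉ F) :
    ∀ x ∈ F \ M.E, IsColoop (Q ↾ F) x := by
  obtain hZ | ⟨_, -, -, hZ⟩ := (hFC.hcyclic _).1 (cyclicFlat_sdiff_coloops_restrict hF)
  · rintro x ⟨hxF, hxE⟩
    exact isColoop_iff_isColoop.2 (by_contra fun hx ↦ hxE (hZ.1.subset_ground ⟨hxF, hx⟩))
  · have haZ : a ∈ F \ (Q ↾ F).coloops := hZ ▸ Or.inl (Or.inr rfl)
    exact absurd haZ.1 haF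

end ConePaper
end

section
/- Let M be a loopless matroid on E, m ≥ 1, and Q = Q_m(M) the free m-cone of M. Then every flat of M is a flat of Q, and the restriction Q|E equals M. -/
/-!
In a finite matroid a set `X` is independent iff `|X ∩ Z| ≤ r(Z)` for every cyclic flat `Z`:
a circuit `C ⊆ X` violates this at its closure, which is a cyclic flat of rank `|C| - 1`.
Comparing the cyclic flats of `Q` and `M` with this criterion, `Q` and `M` have the same
independent subsets of `E`, and adding one point outside `E` to such a set keeps it
`Q`-independent, since every cone has rank one more than its base flat. Hence `Q|E = M`, and the
`Q`-closure of a subset of `E` stays inside `E`, so it is the `M`-closure; flats of `M` are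
therefore flats of `Q`.
-/

open Set Matroid

namespace ConePaper

variable {α : Type*}

lemma cast_rk_eq_eRk {N : Matroid α} (hfin : N.E.Finite) (X : Set α) :
    (rk N X : ℕ∞) = N.eRk X := by
  obtain ⟨I, hI⟩ := N.exists_isBasis' X
  have hIfin : I.Finite := hfin.subset hI.indep.subset_ground
  suffices rk N X = I.ncard by rw [this, hIfin.cast_ncard_eq, hI.encard_eq_eRk]
  refine IsGreatest.csSup_eq ⟨⟨I, hI.indep, hI.subset, rfl⟩, ?_⟩
  rintro n ⟨J, hJ, hJX, rfl⟩
  have hJfin : J.Finite := hfin.subset hJ.subset_ground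
  have := hJ.encard_le_eRk_of_subset hJX
  rw [← hI.encard_eq_eRk, ← hJfin.cast_ncard_eq, ← hIfin.cast_ncard_eq] at this
  exact_mod_cast this

lemma ncard_le_rk {N : Matroid α} (hfin : N.E.Finite) {I X : Set α}
    (hI : N.Indep I) (hIX : I ⊆ X) : I.ncard ≤ rk N X := by
  have := hI.encard_le_eRk_of_subset hIX
  rw [← cast_rk_eq_eRk hfin, ← (hfin.subset hI.subset_ground).cast_ncard_eq] at this
  exact_mod_cast this

lemma cyclicFlat_closure_of_isCircuit {N : Matroid α} {C : Set α} (hC : N.IsCircuit C) :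
    CyclicFlat N (N.closure C) := by
  refine ⟨N.isFlat_closure C, fun e _ he ↦ ?_⟩
  have hbase : ∀ x ∈ C, (N ↾ N.closure C).IsBase (C \ {x}) := fun x hx ↦
    (isBase_restrict_iff (N.closure_subset_ground C)).2
      (hC.sdiff_singleton_isBasis hx).isBasis_closure_right
  obtain ⟨x, hx⟩ := hC.nonempty
  have heC : e ∈ C := (he.2 _ (hbase x hx)).1
  exact (he.2 _ (hbase e heC)).2 rfl

lemma rk_closure_add_one_of_isCircuit {N : Matroid α} (hfin : N.E.Finite) {C : Set α}
    (hC : N.IsCircuit C) : rk N (N.closure C) + 1 = C.ncard := by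
  have h := hC.eRk_add_one_eq
  rw [← N.eRk_closure_eq, ← cast_rk_eq_eRk hfin,
    ← (hfin.subset hC.subset_ground).cast_ncard_eq] at h
  exact_mod_cast h

lemma indep_iff_forall_cyclicFlat {N : Matroid α} (hfin : N.E.Finite) {X : Set α}
    (hXE : X ⊆ N.E) :
    N.Indep X ↔ ∀ Z, CyclicFlat N Z → (X ∩ Z).ncard ≤ rk N Z := by
  refine ⟨fun hX Z _ ↦ ncard_le_rk hfin (hX.inter_right Z) inter_subset_right, fun h ↦ ?_⟩
  by_contra hX
  obtain ⟨C, hCX, hC⟩ := ((not_indep_iff hXE).1 hX).exists_isCircuit_subset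
  have hCZ : C ⊆ X ∩ N.closure C := subset_inter hCX (N.subset_closure C hC.subset_ground)
  have hle := ncard_le_ncard hCZ ((hfin.subset hXE).inter_of_left _)
  have := h _ (cyclicFlat_closure_of_isCircuit hC)
  have := rk_closure_add_one_of_isCircuit hfin hC
  omega

lemma inter_cone_eq_inter {E I F : Set α} {T : α → Set α} {a : α} (hIE : I ⊆ E)
    (ha : a ∉ E) (hT : ∀ e ∈ F, Disjoint (T e) E) : I ∩ cone T a F = I ∩ F := by
  refine Subset.antisymm (fun x ⟨hxI, hx⟩ ↦ ⟨hxI, ?_⟩) (inter_subset_inter_right _ ?_)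
  · rcases hx with (hxF | rfl) | hxT
    · exact hxF
    · exact absurd (hIE hxI) ha
    · obtain ⟨e, he, hxe⟩ := mem_iUnion₂.1 hxT
      exact absurd (hIE hxI) (disjoint_left.1 (hT e he) hxe)
  · exact fun x hx ↦ Or.inl (Or.inl hx)

namespace FreeCone

variable {M Q : Matroid α} {T : α → Set α} {a : α} {m : ℕ}

lemma ground_subset (hFC : FreeCone M Q T a m) : M.E ⊆ Q.E := by
  rw [hFC.hQE]
  exact subset_union_left.trans subset_union_left

lemma ground_finite (hFC : FreeCone M Q T a m) : Q.E.Finite := by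
  rw [hFC.hQE]
  exact (hFC.hMfin.union (hFC.hMfin.biUnion hFC.hTfin)).union (finite_singleton a)

lemma tip_mem_ground (hFC : FreeCone M Q T a m) : a ∈ Q.E := by
  rw [hFC.hQE]
  exact Or.inr rfl

lemma tip_notMem_ground (hFC : FreeCone M Q T a m) : a ∉ M.E :=
  fun h ↦ hFC.ha (Or.inl h)

lemma inter_cone_eq_inter_of_isFlat (hFC : FreeCone M Q T a m) {I F : Set α}
    (hIE : I ⊆ M.E) (hF : M.IsFlat F) : I ∩ cone T a F = I ∩ F :=
  inter_cone_eq_inter hIE hFC.tip_notMem_ground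
    fun e he ↦ hFC.hTdisjE e (hF.subset_ground he)

lemma indep_insert_of_notMem_ground (hFC : FreeCone M Q T a m) {I : Set α} {x : α}
    (hI : M.Indep I) (hxQ : x ∈ Q.E) (hxM : x ∉ M.E) : Q.Indep (insert x I) := by
  have hIE := hI.subset_ground
  refine (indep_iff_forall_cyclicFlat hFC.ground_finite
    (insert_subset hxQ (hIE.trans hFC.ground_subset))).2 fun Z hZ ↦ ?_
  rcases (hFC.hcyclic Z).1 hZ with hZ | ⟨F, hF, hFne, rfl⟩
  · rw [insert_inter_of_notMem fun h ↦ hxM (hZ.1.subset_ground h), hFC.hrank1 Z hZ]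
    exact ncard_le_rk hFC.hMfin (hI.inter_right Z) inter_subset_right
  · have hsub : insert x I ∩ cone T a F ⊆ insert x (I ∩ F) := by
      rw [← hFC.inter_cone_eq_inter_of_isFlat hIE hF]
      exact fun y ⟨hy, hyZ⟩ ↦ hy.imp id fun hyI ↦ ⟨hyI, hyZ⟩
    have hfin : (insert x (I ∩ F)).Finite :=
      ((hFC.hMfin.subset hIE).inter_of_left F).insert x
    have := ncard_le_ncard hsub hfin
    have := ncard_insert_le x (I ∩ F)
    have := ncard_le_rk hFC.hMfin (hI.inter_right F) inter_subset_right
    rw [hFC.hrank2 F hF hFne]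
    omega

lemma indep_iff (hFC : FreeCone M Q T a m) {I : Set α} (hIE : I ⊆ M.E) :
    Q.Indep I ↔ M.Indep I := by
  refine ⟨fun hI ↦ (indep_iff_forall_cyclicFlat hFC.hMfin hIE).2 fun Z hZ ↦ ?_, fun hI ↦ ?_⟩
  · rw [← hFC.hrank1 Z hZ]
    exact ncard_le_rk hFC.ground_finite (hI.inter_right Z) inter_subset_right
  · exact (hFC.indep_insert_of_notMem_ground hI hFC.tip_mem_ground
      hFC.tip_notMem_ground).subset (subset_insert a I)

lemma restrict_ground_eq (hFC : FreeCone M Q T a m) : Q ↾ M.E = M :=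
  ext_indep rfl fun I (hIE : I ⊆ M.E) ↦ by
    rw [restrict_indep_iff, hFC.indep_iff hIE, and_iff_left hIE]

lemma closure_subset_ground (hFC : FreeCone M Q T a m) {X : Set α} (hX : X ⊆ M.E) :
    Q.closure X ⊆ M.E := by
  intro x hx
  by_contra hxM
  obtain ⟨I, hI⟩ := Q.exists_isBasis X (hX.trans hFC.ground_subset)
  have hxI : x ∉ I := fun h ↦ hxM (hX (hI.subset h))
  have hIM : M.Indep I := (hFC.indep_iff (hI.subset.trans hX)).1 hI.indep
  have hins := hFC.indep_insert_of_notMem_ground hIM (Q.closure_subset_ground X hx) hxM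
  rw [hI.indep.insert_indep_iff_of_notMem hxI, hI.closure_eq_closure] at hins
  exact hins.2 hx

lemma closure_eq (hFC : FreeCone M Q T a m) {X : Set α} (hX : X ⊆ M.E) :
    Q.closure X = M.closure X := by
  conv_rhs => rw [← hFC.restrict_ground_eq]
  rw [restrict_closure_eq Q hX hFC.ground_subset,
    inter_eq_self_of_subset_left (hFC.closure_subset_ground hX)]

lemma isFlat_of_isFlat (hFC : FreeCone M Q T a m) {F : Set α} (hF : M.IsFlat F) :
    Q.IsFlat F := by
  rw [isFlat_iff_closure_eq, hFC.closure_eq hF.subset_ground, hF.closure]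

end FreeCone

/-- Every flat of `M` is a flat of its free `m`-cone `Q`, and `Q|E = M`. -/
theorem flats_and_restriction {M Q : Matroid α} {T : α → Set α} {a : α} {m : ℕ}
    (hFC : FreeCone M Q T a m) :
    (∀ F, M.IsFlat F → Q.IsFlat F) ∧ Q ↾ M.E = M :=
  ⟨fun _ ↦ hFC.isFlat_of_isFlat, hFC.restrict_ground_eq⟩

end ConePaper
end

section
/- Let N be a matroid, let L_1, …, L_j be distinct rank-2 flats (lines) of N, each containing a common rank-1 flat {a}. Fix x_i, y_i ∈ L_i - a for each i ∈ [j], and let X = {x_1,…,x_j} and Y = {y_1,…,y_j}. Then X ∪ {a} is independent in N if and only if Y ∪ {a} is independent in N. -/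
open Set Matroid

namespace ConePaper

variable {α : Type*}

lemma ncard_le_of_rk {N : Matroid α} {X I : Set α} {k : ℕ} (h : rk N X = k) (hk : k ≠ 0)
    (hI : N.Indep I) (hIX : I ⊆ X) : I.ncard ≤ k := by
  unfold rk at h
  by_cases hb : BddAbove {n : ℕ | ∃ I, N.Indep I ∧ I ⊆ X ∧ I.ncard = n}
  · exact h ▸ le_csSup hb ⟨I, hI, hIX, rfl⟩
  · rw [csSup_of_not_bddAbove hb, csSup_empty] at h
    exact absurd h.symm hk

lemma indep_of_rk_one {N : Matroid α} {a : α} (h : rk N {a} = 1) : N.Indep {a} := by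
  unfold rk at h
  set S := {n : ℕ | ∃ I, N.Indep I ∧ I ⊆ ({a} : Set α) ∧ I.ncard = n} with hS
  have hne : S.Nonempty := ⟨0, ∅, N.empty_indep, empty_subset _, by simp⟩
  have hb : BddAbove S := by
    by_contra hb
    rw [csSup_of_not_bddAbove hb, csSup_empty] at h
    exact one_ne_zero h.symm
  have h1 : (1 : ℕ) ∈ S := h ▸ Nat.sSup_mem hne hb
  obtain ⟨I, hI, hIa, hc⟩ := h1
  obtain ⟨b, rfl⟩ := Set.ncard_eq_one.mp hc
  rwa [show b = a from hIa rfl] at hI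

/-- For `z ∈ L \ {a}` with `L` a rank-2 flat and `{a}` a rank-1 flat with `a ∈ L`,
the closure of `{a, z}` is `L`. -/
lemma closure_pair_eq_line {N : Matroid α} {L : Set α} {a z : α}
    (hLf : N.IsFlat L) (hLr : rk N L = 2) (haf : N.IsFlat {a}) (har : rk N {a} = 1)
    (haL : a ∈ L) (hz : z ∈ L \ {a}) : N.closure {a, z} = L := by
  have hIa : N.Indep {a} := indep_of_rk_one har
  have hzE : z ∈ N.E := hLf.subset_ground hz.1
  have hza : z ≠ a := hz.2
  have hpair : N.Indep {a, z} := by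
    rw [Set.pair_comm, show ({z, a} : Set α) = insert z {a} by rfl,
      hIa.insert_indep_iff, haf.closure]
    exact Or.inl ⟨hzE, hza⟩
  have hsub : ({a, z} : Set α) ⊆ L := by
    rintro w (rfl | rfl); exacts [haL, hz.1]
  apply subset_antisymm
  · have := N.closure_subset_closure hsub
    rwa [hLf.closure] at this
  · intro w hw
    by_contra hwc
    have hwE : w ∈ N.E := hLf.subset_ground hw
    have hwnm : w ∉ ({a, z} : Set α) := fun hmem => hwc (N.subset_closure _
      (hsub.trans hLf.subset_ground) hmem)
    have hind : N.Indep (insert w {a, z}) := by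
      rw [hpair.insert_indep_iff]
      exact Or.inl ⟨hwE, hwc⟩
    have hcard : (insert w ({a, z} : Set α)).ncard = 3 := by
      rw [Set.ncard_insert_of_notMem hwnm (Set.toFinite _),
        Set.ncard_pair (Ne.symm hza)]
    have := ncard_le_of_rk hLr (by norm_num) hind
      (Set.insert_subset hw hsub)
    omega

theorem key (N : Matroid α) (j : ℕ) (L : Fin j → Set α)
    (hL : ∀ i, N.IsFlat (L i) ∧ rk N (L i) = 2) (hLdist : Function.Injective L)
    (a : α) (ha : N.IsFlat {a} ∧ rk N {a} = 1) (haL : ∀ i, a ∈ L i)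
    (x y : Fin j → α) (hx : ∀ i, x i ∈ L i \ {a}) (hy : ∀ i, y i ∈ L i \ {a})
    (hind : N.Indep (Set.range x ∪ {a})) : N.Indep (Set.range y ∪ {a}) := by
  have hclx : ∀ i, N.closure {a, x i} = L i := fun i =>
    closure_pair_eq_line (hL i).1 (hL i).2 ha.1 ha.2 (haL i) (hx i)
  have hcly : ∀ i, N.closure {a, y i} = L i := fun i =>
    closure_pair_eq_line (hL i).1 (hL i).2 ha.1 ha.2 (haL i) (hy i)
  have hxE : Set.range x ∪ {a} ⊆ N.E := hind.subset_ground
  have hyE : Set.range y ∪ {a} ⊆ N.E := by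
    rintro w (⟨i, rfl⟩ | rfl)
    · exact (hL i).1.subset_ground (hy i).1
    · exact ha.1.subset_ground rfl
  -- the two sets have the same closure
  have hsubxy : ∀ (u v : Fin j → α), (∀ i, N.closure {a, u i} = L i) →
      (∀ i, v i ∈ L i) → (∀ i, u i ∈ N.E) →
      Set.range v ∪ {a} ⊆ N.closure (Set.range u ∪ {a}) := by
    intro u v hu hv huE
    rintro w (⟨i, rfl⟩ | rfl)
    · have h1 : ({a, u i} : Set α) ⊆ Set.range u ∪ {a} := by
        rintro s (rfl | rfl)
        exacts [Or.inr rfl, Or.inl ⟨i, rfl⟩]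
      have := N.closure_subset_closure h1
      exact this (by rw [hu i]; exact hv i)
    · exact N.subset_closure _ (by
        rintro s (⟨i, rfl⟩ | rfl)
        exacts [huE i, ha.1.subset_ground rfl]) (Or.inr rfl)
  have hceq : N.closure (Set.range y ∪ {a}) = N.closure (Set.range x ∪ {a}) := by
    apply subset_antisymm
    · have h1 := hsubxy x y hclx (fun i => (hy i).1) (fun i => hxE (Or.inl ⟨i, rfl⟩))
      have := N.closure_subset_closure h1
      rwa [N.closure_closure] at this
    · have h1 := hsubxy y x hcly (fun i => (hx i).1) (fun i => hyE (Or.inl ⟨i, rfl⟩))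
      have := N.closure_subset_closure h1
      rwa [N.closure_closure] at this
  -- injectivity
  have hinjx : Function.Injective x := by
    intro i i' h
    apply hLdist
    rw [← hclx i, ← hclx i', h]
  have hinjy : Function.Injective y := by
    intro i i' h
    apply hLdist
    rw [← hcly i, ← hcly i', h]
  -- cardinalities
  have hcardu : ∀ (u : Fin j → α), Function.Injective u → (∀ i, u i ≠ a) →
      (Set.range u ∪ {a}).encard = j + 1 := by
    intro u hinj hne
    have hd : Disjoint (Set.range u) ({a} : Set α) :=
      Set.disjoint_singleton_right.mpr (by rintro ⟨i, rfl⟩; exact hne i rfl)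
    rw [Set.encard_union_eq hd, Set.encard_singleton, ← Set.image_univ,
      hinj.encard_image _, Set.encard_univ]
    simp
  have hcx : (Set.range x ∪ {a}).encard = j + 1 := hcardu x hinjx (fun i => (hx i).2)
  have hcy : (Set.range y ∪ {a}).encard = j + 1 := hcardu y hinjy (fun i => (hy i).2)
  -- basis argument
  obtain ⟨I, hI⟩ := N.exists_isBasis (Set.range y ∪ {a}) hyE
  have hIF : N.IsBasis I (N.closure (Set.range x ∪ {a})) := by
    have := hI.isBasis_closure_right
    rwa [hceq] at this
  have hIcard : I.encard = j + 1 := by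
    rw [hIF.encard_eq_encard hind.isBasis_closure, hcx]
  have hIfin : (Set.range y ∪ {a}).Finite := by
    apply Set.Finite.union (Set.finite_range y) (Set.finite_singleton a)
  have : I = Set.range y ∪ {a} :=
    hIfin.eq_of_subset_of_encard_le' hI.subset (by rw [hIcard, hcy])
  rw [← this]
  exact hI.indep

/-- For distinct lines `L i` through a common rank-1 flat `{a}`, and points
`x i, y i ∈ L i \ {a}`, the set `X ∪ {a}` is independent iff `Y ∪ {a}` is. -/
theorem lines_through_point_indep (N : Matroid α) (j : ℕ) (L : Fin j → Set α)
    (hL : ∀ i, N.IsFlat (L i) ∧ rk N (L i) = 2) (hLdist : Function.Injective L)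
    (a : α) (ha : N.IsFlat {a} ∧ rk N {a} = 1) (haL : ∀ i, a ∈ L i)
    (x y : Fin j → α) (hx : ∀ i, x i ∈ L i \ {a}) (hy : ∀ i, y i ∈ L i \ {a}) :
    N.Indep (Set.range x ∪ {a}) ↔ N.Indep (Set.range y ∪ {a}) :=
  ⟨fun h => key N j L hL hLdist a ha haL x y hx hy h,
   fun h => key N j L hL hLdist a ha haL y x hy hx h⟩
end ConePaper
end

section
/- Let M be a loopless matroid on E, m ≥ 1, and Q = Q_m(M) with rank function r and tip a. Define p : 2^{E(Q)} → 2^E by p(S) = (S ∩ E) ∪ {e ∈ E : S ∩ T_e ≠ ∅}. Then for all S ⊆ E(Q): if a ∉ cl_Q(S) then r(p(S)) = r(S), and if a ∈ cl_Q(S) then r(p(S)) = r(S) - 1. -/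
open Set Matroid

namespace ConePaper

variable {α : Type*}

lemma flat_closure (M : Matroid α) (X : Set α) : M.IsFlat (M.closure X) := by
  rw [closure_def]
  have hne : Nonempty {F // M.IsFlat F ∧ X ∩ M.E ⊆ F} :=
    ⟨⟨M.E, M.ground_isFlat, inter_subset_right⟩⟩
  rw [sInter_eq_iInter]
  exact IsFlat.iInter (M := M) (Fs := fun F : {F // M.IsFlat F ∧ X ∩ M.E ⊆ F} ↦ F.1)
    (fun F ↦ F.2.1)

section RankLemmas

variable {N : Matroid α} {X Y I J : Set α} {x : α}

lemma card_le_of_basis' (hE : N.E.Finite) (hI : N.IsBasis' I X) (hJ : N.Indep J)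
    (hJX : J ⊆ X) : J.ncard ≤ I.ncard := by
  by_contra h
  push_neg at h
  have hIf : I.Finite := hE.subset hI.indep.subset_ground
  have hJf : J.Finite := hE.subset hJ.subset_ground
  have hlt : I.encard < J.encard := by
    rw [← hIf.cast_ncard_eq, ← hJf.cast_ncard_eq]
    exact_mod_cast h
  obtain ⟨e, he, hind⟩ := hI.indep.augment hJ hlt
  exact hI.insert_not_indep ⟨hJX he.1, he.2⟩ hind

lemma rk_eq_card_basis' (hE : N.E.Finite) (hI : N.IsBasis' I X) : rk N X = I.ncard := by
  have hmem : I.ncard ∈ {n : ℕ | ∃ J, N.Indep J ∧ J ⊆ X ∧ J.ncard = n} :=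
    ⟨I, hI.indep, hI.subset, rfl⟩
  have hub : ∀ n ∈ {n : ℕ | ∃ J, N.Indep J ∧ J ⊆ X ∧ J.ncard = n}, n ≤ I.ncard := by
    rintro n ⟨J, hJ, hJX, rfl⟩
    exact card_le_of_basis' hE hI hJ hJX
  exact le_antisymm (csSup_le ⟨_, hmem⟩ hub) (le_csSup ⟨_, hub⟩ hmem)

lemma indep_card_le_rk (hE : N.E.Finite) (hI : N.Indep I) (hIX : I ⊆ X) :
    I.ncard ≤ rk N X := by
  obtain ⟨J, hJ⟩ := N.exists_isBasis' X
  rw [rk_eq_card_basis' hE hJ]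
  exact card_le_of_basis' hE hJ hI hIX

lemma rk_mono (hE : N.E.Finite) (h : X ⊆ Y) : rk N X ≤ rk N Y := by
  obtain ⟨I, hI⟩ := N.exists_isBasis' X
  rw [rk_eq_card_basis' hE hI]
  exact indep_card_le_rk hE hI.indep (hI.subset.trans h)

lemma Indep.rk_eq (hE : N.E.Finite) (hI : N.Indep I) : rk N I = I.ncard :=
  rk_eq_card_basis' hE hI.isBasis_self.isBasis'

lemma rk_closure_eq (hE : N.E.Finite) (X : Set α) : rk N (N.closure X) = rk N X := by
  obtain ⟨I, hI⟩ := N.exists_isBasis' X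
  rw [rk_eq_card_basis' hE hI, rk_eq_card_basis' hE hI.isBasis_closure_right.isBasis']

lemma rk_insert_le (hE : N.E.Finite) : rk N (insert x X) ≤ rk N X + 1 := by
  obtain ⟨J, hJ⟩ := N.exists_isBasis' (insert x X)
  rw [rk_eq_card_basis' hE hJ]
  have h1 : (J \ {x}).ncard ≤ rk N X :=
    indep_card_le_rk hE (hJ.indep.subset diff_subset) (by
      intro y hy
      rcases hJ.subset hy.1 with h | h
      · exact absurd h hy.2
      · exact h)
  have hJf : J.Finite := hE.subset hJ.indep.subset_ground
  calc J.ncard ≤ ((J \ {x}) ∪ {x}).ncard := by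
        apply Set.ncard_le_ncard _ (hJf.diff.union (finite_singleton x))
        intro y hy
        by_cases hyx : y = x
        · exact Or.inr hyx
        · exact Or.inl ⟨hy, hyx⟩
    _ ≤ (J \ {x}).ncard + ({x} : Set α).ncard := Set.ncard_union_le _ _
    _ ≤ rk N X + 1 := by simpa using add_le_add_right h1 1

lemma mem_closure_iff_rk (hE : N.E.Finite) (hx : x ∈ N.E) (hX : X ⊆ N.E) :
    x ∈ N.closure X ↔ rk N (insert x X) = rk N X := by
  constructor
  · intro h
    apply le_antisymm
    · have : insert x X ⊆ N.closure X := insert_subset h (N.subset_closure X hX)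
      have := rk_mono hE this
      rwa [rk_closure_eq hE] at this
    · exact rk_mono hE (subset_insert _ _)
  · intro h
    by_contra hxc
    obtain ⟨I, hI⟩ := N.exists_isBasis X
    have hxI : x ∉ N.closure I := by rwa [hI.closure_eq_closure]
    have hxnI : x ∉ I := fun hmem ↦ hxI (N.subset_closure I hI.indep.subset_ground hmem)
    have hins : N.Indep (insert x I) := by
      rw [← hI.indep.notMem_closure_iff_of_notMem hxnI hx]
      exact hxI
    have hcard : (insert x I).ncard = I.ncard + 1 :=
      Set.ncard_insert_of_notMem hxnI (hE.subset hI.indep.subset_ground)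
    have hle : (insert x I).ncard ≤ rk N (insert x X) :=
      indep_card_le_rk hE hins (insert_subset_insert hI.subset)
    have hXr : rk N X = I.ncard := rk_eq_card_basis' hE hI.isBasis'
    omega

lemma rk_insert_eq_add_one (hE : N.E.Finite) (hx : x ∈ N.E) (hX : X ⊆ N.E)
    (h : x ∉ N.closure X) : rk N (insert x X) = rk N X + 1 := by
  have hne := (mem_closure_iff_rk hE hx hX).not.mp h
  have h1 := rk_insert_le (N := N) (x := x) (X := X) hE
  have h2 := rk_mono (N := N) hE (subset_insert x X)
  omega

end RankLemmas

section MainLemmas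

variable {M Q : Matroid α} {T : α → Set α} {a : α} {m : ℕ}

lemma exists_min_dep (N : Matroid α) (n : ℕ) :
    ∀ I : Set α, I.Finite → I.ncard ≤ n → ¬ N.Indep I →
    ∃ C ⊆ I, ¬ N.Indep C ∧ ∀ x ∈ C, N.Indep (C \ {x}) := by
  induction n with
  | zero =>
    intro I hf hc hd
    have h0 : I.ncard = 0 := le_antisymm hc (Nat.zero_le _)
    rw [Set.ncard_eq_zero hf] at h0
    exact absurd (h0 ▸ N.empty_indep) hd
  | succ n ih =>
    intro I hf hc hd
    by_cases h : ∀ x ∈ I, N.Indep (I \ {x})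
    · exact ⟨I, Subset.rfl, hd, h⟩
    · push_neg at h
      obtain ⟨x, hx, hdx⟩ := h
      have hlt := Set.ncard_diff_singleton_lt_of_mem hx hf
      obtain ⟨C, hCI, h1, h2⟩ := ih (I \ {x}) hf.diff (by omega) hdx
      exact ⟨C, hCI.trans diff_subset, h1, h2⟩

lemma FC.hQfin (hFC : FreeCone M Q T a m) : Q.E.Finite := by
  rw [hFC.hQE]
  exact (hFC.hMfin.union (hFC.hMfin.biUnion hFC.hTfin)).union (finite_singleton a)

lemma FC.hME (hFC : FreeCone M Q T a m) : M.E ⊆ Q.E := by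
  rw [hFC.hQE]; intro x hx; exact Or.inl (Or.inl hx)

lemma FC.haQ (hFC : FreeCone M Q T a m) : a ∈ Q.E := by
  rw [hFC.hQE]; exact Or.inr rfl

lemma FC.haM (hFC : FreeCone M Q T a m) : a ∉ M.E :=
  fun h ↦ hFC.ha (Or.inl h)

lemma FC.haT (hFC : FreeCone M Q T a m) {e : α} (he : e ∈ M.E) : a ∉ T e :=
  fun h ↦ hFC.ha (Or.inr (mem_biUnion he h))

lemma FC.hTQ (hFC : FreeCone M Q T a m) {e t : α} (he : e ∈ M.E) (ht : t ∈ T e) :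
    t ∈ Q.E := by
  rw [hFC.hQE]; exact Or.inl (Or.inr (mem_biUnion he ht))

lemma FC.clM_empty (hFC : FreeCone M Q T a m) : M.closure ∅ = ∅ := by
  ext e
  simp only [mem_empty_iff_false, iff_false]
  intro he
  have heE := mem_ground_of_mem_closure he
  have h := M.empty_indep.notMem_closure_iff_of_notMem (notMem_empty e) heE
  exact h.mpr (by simpa using hFC.hloopless e heE) he

lemma FC.cyclicflat_M_empty (hFC : FreeCone M Q T a m) : CyclicFlat M ∅ := by
  constructor
  · have h := flat_closure M ∅
    rwa [FC.clM_empty hFC] at h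
  · intro e he
    exact absurd he (notMem_empty e)

lemma FC.clQ_empty (hFC : FreeCone M Q T a m) : Q.closure ∅ = ∅ :=
  (((hFC.hcyclic ∅).mpr (Or.inl (FC.cyclicflat_M_empty hFC))).1).closure

lemma FC.Qindep_singleton (hFC : FreeCone M Q T a m) {x : α} (hx : x ∈ Q.E) :
    Q.Indep {x} := by
  have h := Q.empty_indep.notMem_closure_iff_of_notMem (notMem_empty x) hx
  have h2 : x ∉ Q.closure ∅ := by rw [FC.clQ_empty hFC]; exact notMem_empty x
  simpa using h.mp h2

lemma FC.rkQ_singleton (hFC : FreeCone M Q T a m) {x : α} (hx : x ∈ Q.E) :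
    rk Q {x} = 1 := by
  rw [Indep.rk_eq (FC.hQfin hFC) (FC.Qindep_singleton hFC hx), ncard_singleton]

lemma FC.not_tip_closure_singleton (hFC : FreeCone M Q T a m) {x : α}
    (hx : x ∈ Q.E) (hxa : x ≠ a) : a ∉ Q.closure {x} := by
  intro ha'
  set F := Q.closure {x} with hF
  have hFE : F ⊆ Q.E := Q.closure_subset_ground _
  have hxF : x ∈ F := Q.mem_closure_self x hx
  have hrkF : rk Q F = 1 := by
    rw [hF, rk_closure_eq (FC.hQfin hFC), FC.rkQ_singleton hFC hx]
  have hsingbase : ∀ y ∈ F, (Q ↾ F).IsBase {y} := by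
    intro y hy
    have hyi : (Q ↾ F).Indep {y} :=
      restrict_indep_iff.mpr ⟨FC.Qindep_singleton hFC (hFE hy), singleton_subset_iff.mpr hy⟩
    obtain ⟨B, hB, hyB⟩ := hyi.exists_isBase_superset
    have hB' : Q.IsBasis' B F := isBase_restrict_iff'.mp hB
    have hcard : B.ncard ≤ 1 := by
      have := indep_card_le_rk (FC.hQfin hFC) hB'.indep hB'.subset
      omega
    have hBy : {y} = B :=
      Set.eq_of_subset_of_ncard_le hyB
        (by rwa [ncard_singleton]) ((FC.hQfin hFC).subset hB'.indep.subset_ground)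
    rwa [← hBy] at hB
  have hcf : CyclicFlat Q F := by
    refine ⟨flat_closure Q {x}, ?_⟩
    rintro z hz ⟨hzE, hall⟩
    have h1 := hall _ (hsingbase x hxF)
    have h2 := hall _ (hsingbase a ha')
    rw [mem_singleton_iff] at h1 h2
    exact hxa (h1 ▸ h2 ▸ rfl)
  rcases (hFC.hcyclic F).mp hcf with hM | ⟨F', hF', hne, hEq⟩
  · exact FC.haM hFC (hM.1.subset_ground ha')
  · have h2 := hFC.hrank2 F' hF' hne
    rw [← hEq] at h2
    obtain ⟨f, hf⟩ := hne
    have h3 : 1 ≤ rk M F' := by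
      have := indep_card_le_rk hFC.hMfin (hFC.hloopless f (hF'.subset_ground hf))
        (singleton_subset_iff.mpr hf)
      simpa using this
    omega

lemma FC.M_indep_of_Q_indep (hFC : FreeCone M Q T a m) {I : Set α}
    (hIE : I ⊆ M.E) (hQI : Q.Indep I) : M.Indep I := by
  by_contra hdep
  obtain ⟨C, hCI, hCdep, hmin⟩ :=
    exists_min_dep M I.ncard I (hFC.hMfin.subset hIE) le_rfl hdep
  have hCE : C ⊆ M.E := hCI.trans hIE
  have hCfin : C.Finite := hFC.hMfin.subset hCE
  have hCne : C.Nonempty := by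
    rcases C.eq_empty_or_nonempty with rfl | h
    · exact absurd M.empty_indep hCdep
    · exact h
  have hclC : ∀ x ∈ C, M.closure (C \ {x}) = M.closure C := by
    intro x hx
    have hxcl : x ∈ M.closure (C \ {x}) := by
      rw [(hmin x hx).mem_closure_iff_of_notMem (by simp)]
      rw [Set.insert_diff_singleton, Set.insert_eq_of_mem hx]
      exact ⟨hCdep, hCE⟩
    have h := closure_insert_eq_of_mem_closure hxcl
    rw [Set.insert_diff_singleton, Set.insert_eq_of_mem hx] at h
    exact h.symm
  have hbasis : ∀ y ∈ C, M.IsBasis (C \ {y}) (M.closure C) := by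
    intro y hy
    refine (hmin y hy).isBasis_of_subset_of_subset_closure
      (diff_subset.trans (M.subset_closure C hCE)) ?_
    rw [hclC y hy]
  have hbase : ∀ y ∈ C, (M ↾ (M.closure C)).IsBase (C \ {y}) := by
    intro y hy
    rw [isBase_restrict_iff']
    exact (hbasis y hy).isBasis'
  have hcfM : CyclicFlat M (M.closure C) := by
    refine ⟨flat_closure M C, ?_⟩
    rintro z hzF ⟨hzE, hall⟩
    by_cases hzC : z ∈ C
    · exact (hall _ (hbase z hzC)).2 rfl
    · obtain ⟨y, hy⟩ := hCne
      exact hzC (hall _ (hbase y hy)).1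
  obtain ⟨y, hy⟩ := id hCne
  have hrkMF : rk M (M.closure C) = (C \ {y}).ncard :=
    rk_eq_card_basis' hFC.hMfin (hbasis y hy).isBasis'
  have hrkQF : rk Q (M.closure C) = rk M (M.closure C) := hFC.hrank1 _ hcfM
  have hQC : C.ncard ≤ rk Q (M.closure C) :=
    indep_card_le_rk (FC.hQfin hFC) (hQI.subset hCI) (M.subset_closure C hCE)
  have hcard : (C \ {y}).ncard = C.ncard - 1 := Set.ncard_diff_singleton_of_mem hy
  have hpos : 0 < C.ncard := (Set.ncard_pos hCfin).mpr hCne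
  omega

lemma FC.rk_Q_le_M (hFC : FreeCone M Q T a m) {X : Set α} (hX : X ⊆ M.E) :
    rk Q X ≤ rk M X := by
  obtain ⟨I, hI⟩ := Q.exists_isBasis' X
  rw [rk_eq_card_basis' (FC.hQfin hFC) hI]
  exact indep_card_le_rk hFC.hMfin
    (FC.M_indep_of_Q_indep hFC (hI.subset.trans hX) hI.indep) hI.subset

lemma FC.mem_closure_pair (hFC : FreeCone M Q T a m) {e t : α}
    (he : e ∈ M.E) (ht : t ∈ T e) :
    t ∈ Q.closure (insert a {e}) ∧ e ∈ Q.closure (insert a {t}) := by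
  have hQfin := FC.hQfin hFC
  have heQ : e ∈ Q.E := FC.hME hFC he
  have htQ : t ∈ Q.E := FC.hTQ hFC he ht
  have hea : e ≠ a := fun h ↦ FC.haM hFC (h ▸ he)
  have hta : t ≠ a := fun h ↦ FC.haT hFC he (h ▸ ht)
  have hecl : e ∈ M.closure {e} := M.mem_closure_self e he
  have hCe_rk : rk Q (cone T a (M.closure {e})) = 2 := by
    rw [hFC.hrank2 _ (flat_closure M {e}) ⟨e, hecl⟩, rk_closure_eq hFC.hMfin,
      Indep.rk_eq hFC.hMfin (hFC.hloopless e he), ncard_singleton]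
  have hsub1 : insert t (insert a {e}) ⊆ cone T a (M.closure {e}) := by
    intro x hx
    rcases hx with rfl | hx
    · exact Or.inr (mem_biUnion hecl ht)
    · rcases hx with rfl | hx
      · exact Or.inl (Or.inr rfl)
      · rw [mem_singleton_iff] at hx
        exact Or.inl (Or.inl (hx ▸ hecl))
  have hsub2 : insert e (insert a {t}) ⊆ cone T a (M.closure {e}) := by
    intro x hx
    rcases hx with rfl | hx
    · exact Or.inl (Or.inl hecl)
    · rcases hx with rfl | hx
      · exact Or.inl (Or.inr rfl)
      · rw [mem_singleton_iff] at hx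
        exact Or.inr (mem_biUnion hecl (hx ▸ ht))
  have hrk_ea : rk Q (insert a {e}) = 2 := by
    rw [rk_insert_eq_add_one hQfin (FC.haQ hFC) (singleton_subset_iff.mpr heQ)
      (FC.not_tip_closure_singleton hFC heQ hea), FC.rkQ_singleton hFC heQ]
  have hrk_ta : rk Q (insert a {t}) = 2 := by
    rw [rk_insert_eq_add_one hQfin (FC.haQ hFC) (singleton_subset_iff.mpr htQ)
      (FC.not_tip_closure_singleton hFC htQ hta), FC.rkQ_singleton hFC htQ]
  constructor
  · rw [mem_closure_iff_rk hQfin htQ (insert_subset (FC.haQ hFC) (singleton_subset_iff.mpr heQ))]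
    have h1 : rk Q (insert t (insert a {e})) ≤ 2 := hCe_rk ▸ rk_mono hQfin hsub1
    have h2 : rk Q (insert a {e}) ≤ rk Q (insert t (insert a {e})) :=
      rk_mono hQfin (subset_insert _ _)
    omega
  · rw [mem_closure_iff_rk hQfin heQ (insert_subset (FC.haQ hFC) (singleton_subset_iff.mpr htQ))]
    have h1 : rk Q (insert e (insert a {t})) ≤ 2 := hCe_rk ▸ rk_mono hQfin hsub2
    have h2 : rk Q (insert a {t}) ≤ rk Q (insert e (insert a {t})) :=
      rk_mono hQfin (subset_insert _ _)
    omega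

lemma FC.not_tip_closure_ground (hFC : FreeCone M Q T a m) : a ∉ Q.closure M.E := by
  rcases M.E.eq_empty_or_nonempty with hE0 | hEne
  · rw [hE0, FC.clQ_empty hFC]
    exact notMem_empty a
  · intro ha'
    have hQfin := FC.hQfin hFC
    have hQEeq : Q.E = cone T a M.E := by
      rw [hFC.hQE]
      unfold cone
      ext x
      simp only [mem_union, mem_singleton_iff]
      tauto
    have hclG : Q.closure M.E = Q.E := by
      apply subset_antisymm (Q.closure_subset_ground _)
      intro x hx
      rw [hFC.hQE] at hx
      rcases hx with (hx | hx) | hx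
      · exact Q.subset_closure M.E (FC.hME hFC) hx
      · simp only [mem_iUnion, exists_prop] at hx
        obtain ⟨e, heE, ht⟩ := hx
        have h1 := (FC.mem_closure_pair hFC heE ht).1
        have h2 : insert a {e} ⊆ Q.closure M.E :=
          insert_subset ha' (singleton_subset_iff.mpr (Q.subset_closure M.E (FC.hME hFC) heE))
        exact closure_subset_closure_of_subset_closure h2 h1
      · rw [mem_singleton_iff] at hx
        exact hx ▸ ha'
    have h1 : rk Q M.E = rk M M.E + 1 := by
      have h := rk_closure_eq hQfin M.E
      rw [hclG] at h
      rw [← h, hQEeq, hFC.hrank2 M.E M.ground_isFlat hEne]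
    have h2 := FC.rk_Q_le_M hFC (Subset.rfl : M.E ⊆ M.E)
    omega

lemma FC.not_tip_closure (hFC : FreeCone M Q T a m) {X : Set α} (hX : X ⊆ M.E) :
    a ∉ Q.closure X :=
  fun h ↦ FC.not_tip_closure_ground hFC (Q.closure_subset_closure hX h)

end MainLemmas

/-- The rank of the projection: `r(p(S)) = r(S)` if `a ∉ cl_Q(S)`, and
`r(p(S)) = r(S) - 1` if `a ∈ cl_Q(S)`. -/
theorem rank_of_projection {M Q : Matroid α} {T : α → Set α} {a : α} {m : ℕ}
    (hFC : FreeCone M Q T a m) (S : Set α) (hS : S ⊆ Q.E) :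
    (a ∉ Q.closure S → rk Q (proj M.E T S) = rk Q S) ∧
    (a ∈ Q.closure S → rk Q (proj M.E T S) + 1 = rk Q S) := by
  have hQfin := FC.hQfin hFC
  have haQ := FC.haQ hFC
  have hpS : proj M.E T S ⊆ M.E := by
    rintro y (⟨-, hyE⟩ | hy)
    · exact hyE
    · exact hy.1
  have hpSQ : proj M.E T S ⊆ Q.E := hpS.trans (FC.hME hFC)
  have hcl : Q.closure (insert a S) = Q.closure (insert a (proj M.E T S)) := by
    apply subset_antisymm
    · apply closure_subset_closure_of_subset_closure
      intro x hx
      rcases hx with rfl | hxS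
      · exact Q.subset_closure _ (insert_subset haQ hpSQ) (mem_insert _ _)
      · have hxQ := hS hxS
        rw [hFC.hQE] at hxQ
        rcases hxQ with (hxE | hxT) | hxa
        · exact Q.subset_closure _ (insert_subset haQ hpSQ)
            (mem_insert_of_mem _ (Or.inl ⟨hxS, hxE⟩))
        · simp only [mem_iUnion, exists_prop] at hxT
          obtain ⟨e, heE, ht⟩ := hxT
          have hmem := (FC.mem_closure_pair hFC heE ht).1
          have hsub : insert a {e} ⊆ insert a (proj M.E T S) :=
            insert_subset_insert (singleton_subset_iff.mpr (Or.inr ⟨heE, ⟨x, hxS, ht⟩⟩))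
          exact Q.closure_subset_closure hsub hmem
        · rw [mem_singleton_iff] at hxa
          exact Q.subset_closure _ (insert_subset haQ hpSQ) (hxa ▸ mem_insert _ _)
    · apply closure_subset_closure_of_subset_closure
      intro y hy
      rcases hy with rfl | hyP
      · exact Q.subset_closure _ (insert_subset haQ hS) (mem_insert _ _)
      · rcases hyP with ⟨hyS, -⟩ | ⟨hyE, t, htS, htT⟩
        · exact Q.subset_closure _ (insert_subset haQ hS) (mem_insert_of_mem _ hyS)
        · have hmem := (FC.mem_closure_pair hFC hyE htT).2
          have hsub : insert a {t} ⊆ insert a S :=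
            insert_subset_insert (singleton_subset_iff.mpr htS)
          exact Q.closure_subset_closure hsub hmem
  have hrkcl : rk Q (insert a S) = rk Q (insert a (proj M.E T S)) := by
    rw [← rk_closure_eq hQfin (insert a S), hcl, rk_closure_eq hQfin]
  have hrkp : rk Q (insert a (proj M.E T S)) = rk Q (proj M.E T S) + 1 :=
    rk_insert_eq_add_one hQfin haQ hpSQ (FC.not_tip_closure hFC hpS)
  constructor
  · intro hna
    have h := rk_insert_eq_add_one hQfin haQ hS hna
    omega
  · intro hyes
    have h := (mem_closure_iff_rk hQfin haQ hS).mp hyes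
    omega

end ConePaper
end

section
/- Let M be a loopless matroid on E. Then the tipless baseless 1-cone Q_1(M) \ (E ∪ {a}) is isomorphic to the Higgs lift L(M) of M, where L(M) is the matroid on E with rank function r_L(X) = min{r(X) + 1, |X|}. -/
open Set Matroid

namespace ConePaper

variable {α : Type*}

/-! The deletion of `E ∪ {a}` is the image under `t` of the matroid `L` on `E` in which `I` is
independent iff `t '' I` is independent in `Q`. A circuit `C` of `Q` among the points `t e` spans
a cyclic flat of `Q`; being disjoint from `E` it is the cone `q(F)` over a flat `F` of `M`, so
`|C| = r(F) + 2`. Hence any `J ⊆ E` having an `M`-independent subset `B` with `|J| ≤ |B| + 1` is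
`L`-independent, as `|J ∩ F| ≤ |B ∩ F| + 1 ≤ r(F) + 1`; conversely an `L`-independent subset of
`X` maps into `q(cl X)`, of rank `r(X) + 1`. So `r_L(X) = min (r(X) + 1) |X|`. -/

section Rank

variable {M : Matroid α} {C I X : Set α}

theorem rk_eq_toNat_eRk (M : Matroid α) (X : Set α) : rk M X = (M.eRk X).toNat := by
  obtain ⟨I, hI⟩ := M.exists_isBasis' X
  rw [← hI.encard_eq_eRk, ← ncard_def]
  obtain hfin | hinf := I.finite_or_infinite
  · refine IsGreatest.csSup_eq ⟨⟨I, hI.indep, hI.subset, rfl⟩, ?_⟩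
    rintro _ ⟨J, hJ, hJX, rfl⟩
    exact ENat.toNat_le_toNat (hI.encard_eq_eRk ▸ hJ.encard_le_eRk_of_subset hJX)
      (encard_ne_top_iff.2 hfin)
  -- both sides are junk `0`: the sizes of independent subsets of `X` are unbounded
  · rw [hinf.ncard]
    refine Nat.sSup_of_not_bddAbove fun ⟨n, hn⟩ => ?_
    obtain ⟨J, hJI, -, hJn⟩ := hinf.exists_subset_ncard_eq (n + 1)
    have := hn ⟨J, hI.indep.subset hJI, hJI.trans hI.subset, hJn⟩
    omega

theorem rk_eq_ncard_of_isBasis' (hI : M.IsBasis' I X) : rk M X = I.ncard := by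
  rw [rk_eq_toNat_eRk, ← hI.encard_eq_eRk, ncard_def]

theorem ncard_le_rk_of_indep [M.RankFinite] (hI : M.Indep I) (hIX : I ⊆ X) :
    I.ncard ≤ rk M X := by
  rw [rk_eq_toNat_eRk, ncard_def]
  exact ENat.toNat_le_toNat (hI.encard_le_eRk_of_subset hIX)
    (eRk_ne_top_iff.2 (M.isRkFinite_set X))

theorem rk_le_ncard (hX : X.Finite) : rk M X ≤ X.ncard := by
  rw [rk_eq_toNat_eRk, ncard_def]
  exact ENat.toNat_le_toNat (M.eRk_le_encard X) (encard_ne_top_iff.2 hX)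

theorem rk_closure (M : Matroid α) (X : Set α) : rk M (M.closure X) = rk M X := by
  rw [rk_eq_toNat_eRk, rk_eq_toNat_eRk, eRk_closure_eq]

theorem ncard_eq_rk_closure_add_one [M.RankFinite] (hC : M.IsCircuit C) :
    C.ncard = rk M (M.closure C) + 1 := by
  have hfin : M.eRk C ≠ ⊤ := eRk_ne_top_iff.2 (M.isRkFinite_set C)
  rw [rk_closure, rk_eq_toNat_eRk, ncard_def, ← hC.eRk_add_one_eq,
    ENat.toNat_add hfin ENat.one_ne_top, ENat.toNat_one]

theorem cyclicFlat_closure_of_isCircuit_s7 (hC : M.IsCircuit C) : CyclicFlat M (M.closure C) := by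
  refine ⟨M.isFlat_closure C, fun e _ hcol => ?_⟩
  -- a basis `C \ {c}` of the closure that avoids `e`
  obtain ⟨c, hc, hec⟩ : ∃ c ∈ C, e ∈ C → e = c := by
    by_cases heC : e ∈ C
    · exact ⟨e, heC, fun _ => rfl⟩
    · obtain ⟨c, hc⟩ := hC.nonempty
      exact ⟨c, hc, fun h => absurd h heC⟩
  have hbase : (M ↾ M.closure C).IsBase (C \ {c}) :=
    (isBase_restrict_iff (M.closure_subset_ground C)).2
      (hC.sdiff_singleton_isBasis hc).isBasis_closure_right
  obtain ⟨heC, hne⟩ := hcol.2 _ hbase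
  exact hne (hec heC)

end Rank

theorem ncard_inter_le_ncard_inter_add_one {B J : Set α} (F : Set α) (hBJ : B ⊆ J)
    (hJ : J.Finite) (hcard : J.ncard ≤ B.ncard + 1) : (J ∩ F).ncard ≤ (B ∩ F).ncard + 1 := by
  have hsplit : J ∩ F ⊆ (B ∩ F) ∪ (J \ B) := fun x ⟨hxJ, hxF⟩ =>
    (em (x ∈ B)).elim (fun hxB => Or.inl ⟨hxB, hxF⟩) fun hxB => Or.inr ⟨hxJ, hxB⟩
  have hdiff : (J \ B).ncard = J.ncard - B.ncard := ncard_sdiff hBJ (hJ.subset hBJ)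
  calc (J ∩ F).ncard ≤ ((B ∩ F) ∪ (J \ B)).ncard :=
        ncard_le_ncard hsplit (((hJ.subset hBJ).inter_of_left F).union hJ.sdiff)
    _ ≤ (B ∩ F).ncard + (J \ B).ncard := ncard_union_le _ _
    _ ≤ (B ∩ F).ncard + 1 := by omega

section Comap

variable {β : Type*} {N : Matroid β} {E : Set α} {f : α → β}

theorem _root_.Matroid.comapOn_restrict_image_indep_iff (hf : InjOn f E) {I : Set α} :
    ((N ↾ f '' E).comapOn E f).Indep I ↔ N.Indep (f '' I) ∧ I ⊆ E := by
  rw [comapOn_indep_iff, restrict_indep_iff]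
  exact ⟨fun ⟨⟨hI, _⟩, _, hIE⟩ => ⟨hI, hIE⟩,
    fun ⟨hI, hIE⟩ => ⟨⟨hI, image_mono hIE⟩, hf.mono hIE, hIE⟩⟩

theorem _root_.Matroid.map_comapOn_restrict_image (N : Matroid β) (hf : InjOn f E) :
    ((N ↾ f '' E).comapOn E f).map f hf = N ↾ f '' E := by
  refine ext_indep rfl fun I _ => map_indep_iff.trans ?_
  simp only [comapOn_restrict_image_indep_iff hf, restrict_indep_iff]
  refine ⟨fun ⟨I₀, ⟨hI₀, hI₀E⟩, hII₀⟩ => ⟨hII₀ ▸ hI₀, hII₀ ▸ image_mono hI₀E⟩,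
    fun ⟨hI, hIE⟩ => ?_⟩
  obtain ⟨I₀, hI₀E, rfl⟩ := subset_image_iff.1 hIE
  exact ⟨I₀, ⟨hI, hI₀E⟩, rfl⟩

end Comap

namespace FreeCone

variable {M Q : Matroid α} {t : α → α} {a : α} {B F I J X : Set α}

theorem injOn (hFC : FreeCone M Q (fun e => {t e}) a 1) : InjOn t M.E :=
  fun e he f hf hef => by_contra fun hne => disjoint_singleton.1 (hFC.hTdisj e he f hf hne) hef

theorem notMem_ground (hFC : FreeCone M Q (fun e => {t e}) a 1) {e : α} (he : e ∈ M.E) :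
    t e ∉ M.E :=
  disjoint_singleton_left.1 (hFC.hTdisjE e he)

theorem ne_tip (hFC : FreeCone M Q (fun e => {t e}) a 1) {e : α} (he : e ∈ M.E) : t e ≠ a :=
  fun h => hFC.ha (Or.inr (mem_biUnion he (h ▸ rfl)))

theorem ground_sdiff_eq_image (hFC : FreeCone M Q (fun e => {t e}) a 1) :
    Q.E \ (M.E ∪ {a}) = t '' M.E := by
  rw [hFC.hQE, ← image_eq_iUnion]
  ext x
  constructor
  · rintro ⟨(hxE | hxT) | hxa, hx⟩
    exacts [absurd (Or.inl hxE) hx, hxT, absurd (Or.inr hxa) hx]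
  · rintro ⟨e, he, rfl⟩
    exact ⟨Or.inl (Or.inr ⟨e, he, rfl⟩), fun h => h.elim (hFC.notMem_ground he) (hFC.ne_tip he)⟩

theorem finite (hFC : FreeCone M Q (fun e => {t e}) a 1) : M.Finite := ⟨hFC.hMfin⟩

theorem finite_cone (hFC : FreeCone M Q (fun e => {t e}) a 1) : Q.Finite := by
  refine ⟨?_⟩
  rw [hFC.hQE, ← image_eq_iUnion]
  exact (hFC.hMfin.union (hFC.hMfin.image t)).union (finite_singleton a)

theorem image_subset_ground (hFC : FreeCone M Q (fun e => {t e}) a 1) (hJ : J ⊆ M.E) :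
    t '' J ⊆ Q.E :=
  (image_mono hJ).trans (hFC.ground_sdiff_eq_image ▸ sdiff_subset)

theorem mem_cone_iff (hFC : FreeCone M Q (fun e => {t e}) a 1) {e : α} (he : e ∈ M.E)
    (hF : F ⊆ M.E) : t e ∈ cone (fun e => {t e}) a F ↔ e ∈ F := by
  refine ⟨?_, fun heF => Or.inr (mem_biUnion heF rfl)⟩
  rintro ((h | h) | h)
  · exact absurd (hF h) (hFC.notMem_ground he)
  · exact absurd h (hFC.ne_tip he)
  · obtain ⟨f, hf, hef⟩ := mem_iUnion₂.1 h
    exact hFC.injOn he (hF hf) hef ▸ hf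

theorem exists_isFlat_of_isCircuit (hFC : FreeCone M Q (fun e => {t e}) a 1) {C : Set α}
    (hCE : C ⊆ t '' M.E) (hC : Q.IsCircuit C) :
    ∃ F, M.IsFlat F ∧ C ⊆ t '' F ∧ C.ncard = rk M F + 2 := by
  have := hFC.finite_cone
  have hCcl : C ⊆ Q.closure C := Q.subset_closure C hC.subset_ground
  rcases (hFC.hcyclic _).1 (cyclicFlat_closure_of_isCircuit_s7 hC) with hM | ⟨F, hF, hFne, hclF⟩
  · obtain ⟨c, hc⟩ := hC.nonempty
    obtain ⟨e, he, rfl⟩ := hCE hc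
    exact absurd (hM.1.subset_ground (hCcl hc)) (hFC.notMem_ground he)
  refine ⟨F, hF, fun c hc => ?_, ?_⟩
  · obtain ⟨e, he, rfl⟩ := hCE hc
    exact ⟨e, (hFC.mem_cone_iff he hF.subset_ground).1 (hclF ▸ hCcl hc), rfl⟩
  · rw [ncard_eq_rk_closure_add_one hC, hclF, hFC.hrank2 F hF hFne]

theorem indep_image (hFC : FreeCone M Q (fun e => {t e}) a 1) (hJ : J ⊆ M.E) (hBJ : B ⊆ J)
    (hB : M.Indep B) (hcard : J.ncard ≤ B.ncard + 1) : Q.Indep (t '' J) := by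
  have := hFC.finite
  rw [indep_iff_forall_subset_not_isCircuit (hFC.image_subset_ground hJ)]
  intro C hCJ hC
  obtain ⟨F, hF, hCF, hCcard⟩ := hFC.exists_isFlat_of_isCircuit (hCJ.trans (image_mono hJ)) hC
  have hJfin : J.Finite := hFC.hMfin.subset hJ
  have hCJF : C ⊆ t '' (J ∩ F) := by
    rw [hFC.injOn.image_inter hJ hF.subset_ground]
    exact subset_inter hCJ hCF
  have hCle : C.ncard ≤ (J ∩ F).ncard :=
    calc C.ncard ≤ (t '' (J ∩ F)).ncard := ncard_le_ncard hCJF ((hJfin.inter_of_left F).image t)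
      _ = (J ∩ F).ncard := (hFC.injOn.mono (inter_subset_left.trans hJ)).ncard_image
  have hJF := ncard_inter_le_ncard_inter_add_one F hBJ hJfin hcard
  have hBF := ncard_le_rk_of_indep (X := F) (hB.subset inter_subset_left) inter_subset_right
  omega

theorem ncard_le_rk_add_one_of_indep_image (hFC : FreeCone M Q (fun e => {t e}) a 1)
    (hIX : I ⊆ X) (hX : X ⊆ M.E) (hI : Q.Indep (t '' I)) : I.ncard ≤ rk M X + 1 := by
  have := hFC.finite_cone
  obtain rfl | ⟨e, he⟩ := I.eq_empty_or_nonempty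
  · simp
  have hsub : t '' I ⊆ cone (fun e => {t e}) a (M.closure X) := by
    rintro _ ⟨f, hf, rfl⟩
    exact (hFC.mem_cone_iff (hX (hIX hf)) (M.closure_subset_ground X)).2
      (M.subset_closure X hX (hIX hf))
  calc I.ncard = (t '' I).ncard := ((hFC.injOn.mono (hIX.trans hX)).ncard_image).symm
    _ ≤ rk Q (cone (fun e => {t e}) a (M.closure X)) := ncard_le_rk_of_indep hI hsub
    _ = rk M X + 1 := by
      rw [hFC.hrank2 _ (M.isFlat_closure X) ⟨e, M.subset_closure X hX (hIX he)⟩, rk_closure]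

theorem rk_comapOn_restrict_image (hFC : FreeCone M Q (fun e => {t e}) a 1) (hX : X ⊆ M.E) :
    rk ((Q ↾ t '' M.E).comapOn M.E t) X = min (rk M X + 1) X.ncard := by
  set L := (Q ↾ t '' M.E).comapOn M.E t
  have : L.Finite := ⟨hFC.hMfin⟩
  have hLindep : ∀ {I}, L.Indep I ↔ Q.Indep (t '' I) ∧ I ⊆ M.E :=
    comapOn_restrict_image_indep_iff hFC.injOn
  have hXfin : X.Finite := hFC.hMfin.subset hX
  refine le_antisymm (le_min ?_ (rk_le_ncard hXfin)) ?_
  · obtain ⟨I, hI⟩ := L.exists_isBasis' X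
    rw [rk_eq_ncard_of_isBasis' hI]
    exact hFC.ncard_le_rk_add_one_of_indep_image hI.subset hX (hLindep.1 hI.indep).1
  · obtain ⟨B, hB⟩ := M.exists_isBasis X hX
    rw [rk_eq_ncard_of_isBasis' hB.isBasis']
    obtain ⟨J, hBJ, hJX, hJcard⟩ := exists_subsuperset_card_eq hB.subset
      (le_min (Nat.le_succ _) (ncard_le_ncard hB.subset hXfin)) (min_le_right _ X.ncard)
    have hJ : L.Indep J := hLindep.2
      ⟨hFC.indep_image (hJX.trans hX) hBJ hB.indep (hJcard ▸ min_le_left _ _), hJX.trans hX⟩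
    exact hJcard ▸ ncard_le_rk_of_indep hJ hJX

end FreeCone

/-- The tipless baseless 1-cone is isomorphic to the Higgs lift of `M`, via the
bijection sending `t e` to `e`. -/
theorem tipless_baseless_one_cone_eq_higgs_lift {M Q : Matroid α} {t : α → α} {a : α}
    (hFC : FreeCone M Q (fun e => {t e}) a 1) :
    ∃ L : Matroid α, L.E = M.E ∧
      (∀ X ⊆ M.E, rk L X = min (rk M X + 1) X.ncard) ∧
      ∃ hinj : Set.InjOn t L.E, mdel Q (M.E ∪ {a}) = L.map t hinj := by
  refine ⟨(Q ↾ t '' M.E).comapOn M.E t, rfl, fun _ => hFC.rk_comapOn_restrict_image,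
    hFC.injOn, ?_⟩
  rw [mdel, hFC.ground_sdiff_eq_image, map_comapOn_restrict_image]
end ConePaper
end

section
/- Let M be a matroid on ground set E, and let S ⊆ E be nonempty with r(M \ S) = r(M). Then the flags of M \ S are exactly the sequences (Y_0 - S, Y_1 - S, …, Y_k - S) where (Y_0, …, Y_k) ranges over the flags of M that do not collapse in M \ S. -/
open Set Matroid

namespace ConePaper

variable {α : Type*}

/-!
A flat `F` of `M` leaves the flat `F \ S` of `M ＼ S`, and a flat `Z` of `M ＼ S` is recovered as
`cl_M(Z) \ S`, where `cl_M(Z)` has the same rank as `Z`. Hence the closures of a flag of `M ＼ S`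
form a flag of `M` that does not collapse. Conversely, the traces of a non-collapsing flag of `M`
form a strictly increasing chain of `k + 1` flats of `M ＼ S`; their ranks strictly increase and
are at most `r(M ＼ S) = k`, so they are exactly `0, …, k`.
-/

variable {M N : Matroid α} {D F F' X Y Z : Set α} {k : ℕ}

lemma eq_self_of_lt_succ_of_le_self (f : ℕ → ℕ) (hf : ∀ i < k, f i < f (i + 1)) (hk : f k ≤ k) :
    ∀ i ≤ k, f i = i := by
  have hup : ∀ i ≤ k, i ≤ f i := by
    intro i
    induction i with
    | zero => simp
    | succ i ih =>
      intro hi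
      have := hf i (by omega)
      have := ih (by omega)
      omega
  have hdown : ∀ d ≤ k, f (k - d) + d ≤ k := by
    intro d
    induction d with
    | zero => simpa using hk
    | succ d ih =>
      intro hd
      have hstep := hf (k - (d + 1)) (by omega)
      rw [show k - (d + 1) + 1 = k - d by omega] at hstep
      have := ih (by omega)
      omega
  intro i hi
  have := hup i hi
  have := hdown (k - i) (by omega)
  rw [Nat.sub_sub_self hi] at this
  omega

lemma natCast_rk_eq_eRk [M.RankFinite] (X : Set α) : (rk M X : ℕ∞) = M.eRk X := by
  obtain ⟨I, hI⟩ := M.exists_isBasis' X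
  have hmax : IsGreatest {n : ℕ | ∃ I, M.Indep I ∧ I ⊆ X ∧ I.ncard = n} I.ncard := by
    refine ⟨⟨I, hI.indep, hI.subset, rfl⟩, ?_⟩
    rintro _ ⟨J, hJ, hJX, rfl⟩
    have hJI : J.encard ≤ I.encard := hI.eRk_eq_encard ▸ hJ.encard_le_eRk_of_subset hJX
    rwa [← hJ.finite.cast_ncard_eq, ← hI.indep.finite.cast_ncard_eq, Nat.cast_le] at hJI
  rw [rk, hmax.csSup_eq, hI.indep.finite.cast_ncard_eq, hI.eRk_eq_encard]

lemma rk_mono_s9 [M.RankFinite] (hXY : X ⊆ Y) : rk M X ≤ rk M Y := by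
  rw [← Nat.cast_le (α := ℕ∞), natCast_rk_eq_eRk, natCast_rk_eq_eRk]
  exact M.eRk_mono hXY

lemma rk_closure_eq_s9 [M.RankFinite] (X : Set α) : rk M (M.closure X) = rk M X := by
  rw [← Nat.cast_inj (R := ℕ∞), natCast_rk_eq_eRk, natCast_rk_eq_eRk, eRk_closure_eq]

lemma rk_delete_eq_of_disjoint (hXD : Disjoint X D) : rk (M ＼ D) X = rk M X := by
  unfold rk
  congr 1
  ext n
  refine exists_congr fun I ↦ ⟨fun ⟨hI, hIX, hn⟩ ↦ ⟨hI.of_delete, hIX, hn⟩,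
    fun ⟨hI, hIX, hn⟩ ↦ ⟨delete_indep_iff.2 ⟨hI, hXD.mono_left hIX⟩, hIX, hn⟩⟩

lemma rk_lt_rk_of_ssubset [M.RankFinite] (hF : M.IsFlat F) (hF' : M.IsFlat F')
    (hFF' : F ⊂ F') : rk M F < rk M F' := by
  refine (rk_mono_s9 hFF'.subset).lt_of_ne fun hrk ↦ hFF'.ne ?_
  have hle : M.eRk F' ≤ M.eRk F := by
    rw [← natCast_rk_eq_eRk, ← natCast_rk_eq_eRk, hrk]
  rw [← hF.closure, ← hF'.closure]
  exact (M.isRkFinite_set F).closure_eq_closure_of_subset_of_eRk_ge_eRk hFF'.subset hle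

lemma isFlat_delete_sdiff (hF : M.IsFlat F) (D : Set α) : (M ＼ D).IsFlat (F \ D) := by
  rw [isFlat_iff_closure_eq, delete_closure_eq, sdiff_idem]
  refine subset_antisymm (sdiff_subset_sdiff_left ?_) (subset_sdiff.2 ⟨?_, disjoint_sdiff_left⟩)
  · exact (M.closure_subset_closure sdiff_subset).trans hF.closure.subset
  · exact M.subset_closure _ (sdiff_subset.trans hF.subset_ground)

lemma closure_sdiff_eq_of_isFlat_delete (hZ : (M ＼ D).IsFlat Z) : M.closure Z \ D = Z := by
  have hZD : Disjoint Z D := (subset_sdiff.1 hZ.subset_ground).2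
  rw [← delete_closure_eq_of_disjoint M hZD, hZ.closure]

lemma isFlag_of_ssubset_chain [N.RankFinite] {X : ℕ → Set α} (hflat : ∀ i ≤ k, N.IsFlat (X i))
    (hchain : ∀ i < k, X i ⊂ X (i + 1)) (hk : rk N N.E ≤ k) : IsFlag N k X := by
  have hrk := eq_self_of_lt_succ_of_le_self (fun i ↦ rk N (X i))
    (fun i hi ↦ rk_lt_rk_of_ssubset (hflat i hi.le) (hflat (i + 1) hi) (hchain i hi))
    ((rk_mono_s9 (hflat k le_rfl).subset_ground).trans hk)
  exact ⟨fun i hi ↦ ⟨hflat i hi, hrk i hi⟩, hchain⟩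

lemma IsFlag.closure_of_delete [M.RankFinite] {Z : ℕ → Set α} (hZ : IsFlag (M ＼ D) k Z) :
    IsFlag M k (fun i ↦ M.closure (Z i)) := by
  have hrk : ∀ i ≤ k, rk M (M.closure (Z i)) = i := fun i hi ↦ by
    have hZD : Disjoint (Z i) D := (subset_sdiff.1 (hZ.1 i hi).1.subset_ground).2
    rw [rk_closure_eq_s9, ← rk_delete_eq_of_disjoint hZD, (hZ.1 i hi).2]
  refine ⟨fun i hi ↦ ⟨M.isFlat_closure _, hrk i hi⟩, fun i hi ↦ ?_⟩
  refine (M.closure_subset_closure (hZ.2 i hi).subset).ssubset_of_ne fun heq ↦ ?_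
  have := hrk (i + 1) hi
  rw [← heq, hrk i hi.le] at this
  omega

lemma mdel_eq_delete (M : Matroid α) (D : Set α) : mdel M D = M ＼ D := rfl

theorem flags_of_deletion_general (M : Matroid α) (hfin : M.E.Finite)
    (S : Set α) (k : ℕ) (hr : rk (mdel M S) (M.E \ S) = k) :
    ∀ Z : ℕ → Set α,
      IsFlag (mdel M S) k Z ↔
        ∃ Y : ℕ → Set α, IsFlag M k Y ∧ (∀ i < k, Y i \ S ≠ Y (i + 1) \ S) ∧
          ∀ i ≤ k, Z i = Y i \ S := by
  have : M.Finite := ⟨hfin⟩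
  rw [mdel_eq_delete] at hr ⊢
  intro Z
  constructor
  · intro hZ
    have hZY : ∀ i ≤ k, M.closure (Z i) \ S = Z i := fun i hi ↦
      closure_sdiff_eq_of_isFlat_delete (hZ.1 i hi).1
    refine ⟨_, hZ.closure_of_delete, fun i hi ↦ ?_, fun i hi ↦ (hZY i hi).symm⟩
    rw [hZY i hi.le, hZY (i + 1) hi]
    exact (hZ.2 i hi).ne
  · rintro ⟨Y, hY, hnc, hZY⟩
    refine isFlag_of_ssubset_chain (fun i hi ↦ ?_) (fun i hi ↦ ?_) hr.le
    · exact hZY i hi ▸ isFlat_delete_sdiff (hY.1 i hi).1 S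
    · rw [hZY i hi.le, hZY (i + 1) hi]
      exact (sdiff_subset_sdiff_left (hY.2 i hi).subset).ssubset_of_ne (hnc i hi)

/-- When `r(M \ S) = r(M)`, the flags of `M \ S` are exactly the images `(Y i \ S)`
of the flags `(Y i)` of `M` that do not collapse. -/
theorem flags_of_deletion (M : Matroid α) (hfin : M.E.Finite)
    (S : Set α) (hSE : S ⊆ M.E) (hne : S.Nonempty) (k : ℕ) (hk : rk M M.E = k)
    (hr : rk (mdel M S) (M.E \ S) = k) :
    ∀ Z : ℕ → Set α,
      IsFlag (mdel M S) k Z ↔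
        ∃ Y : ℕ → Set α, IsFlag M k Y ∧ (∀ i < k, Y i \ S ≠ Y (i + 1) \ S) ∧
          ∀ i ≤ k, Z i = Y i \ S :=
  flags_of_deletion_general M hfin S k hr

end ConePaper
end

section
/- Let M be a loopless matroid on E, m ≥ 1, and Q = Q_m(M) with tip a. If C is a circuit of Q with C ⊄ E, then a ∈ cl_Q(C). -/
open Set Matroid

namespace ConePaper

variable {α : Type*}

lemma isCircuit_iff_isCircuit {N : Matroid α} {C : Set α} : IsCircuit N C ↔ N.IsCircuit C := by
  rw [isCircuit_iff_dep_forall_sdiff_singleton_indep, dep_iff, IsCircuit]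
  tauto

lemma cyclicFlat_of_forall_mem_closure_sdiff {N : Matroid α} {F : Set α} (hF : N.IsFlat F)
    (hspan : ∀ e ∈ F, e ∈ N.closure (F \ {e})) : CyclicFlat N F := by
  refine ⟨hF, fun e he hco ↦ ?_⟩
  rw [isColoop_iff_isColoop, restrict_isColoop_iff hF.subset_ground] at hco
  exact hco.1 (hspan e he)

/-- Any circuit of the free `m`-cone not contained in `E` has the tip in its closure. -/
theorem tip_mem_closure_circuit {M Q : Matroid α} {T : α → Set α} {a : α} {m : ℕ}
    (hFC : FreeCone M Q T a m) (C : Set α) (hC : IsCircuit Q C) (hCE : ¬ C ⊆ M.E) :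
    a ∈ Q.closure C := by
  have hC' : Q.IsCircuit C := isCircuit_iff_isCircuit.1 hC
  rcases (hFC.hcyclic _).1 (cyclicFlat_closure_of_isCircuit hC') with hM | ⟨F, -, -, hcone⟩
  · exact absurd ((Q.subset_closure C hC'.subset_ground).trans hM.1.subset_ground) hCE
  · rw [hcone]
    exact Or.inl (Or.inr rfl)

end ConePaper
end
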